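/- arXiv:1908.01039 — 8 statements merged into one kernel-verified Lean document; each statement's English description precedes it below -/
import Mathlib

section
/- Let Φ(z) = z^n + φ_1 z^{n−1} + ⋯ + φ_{n−1} z + φ_n and Ψ(z) = z^n + ψ_1 z^{n−1} + ⋯ + ψ_{n−1} z + ψ_n be two monic complex polynomials of degree n, and suppose the ℓ2 distance of their coefficient vectors satisfies ‖(φ_1,…,φ_n) − (ψ_1,…,ψ_n)‖₂ ≤ ε. Let C = max({1} ∪ {|φ_k|^{1/k} : 1 ≤ k ≤ n} ∪ {|ψ_k|^{1/k} : 1 ≤ k ≤ n}). Then the roots of Φ and Ψ over ℂ (counted with multiplicity) can be enumerated as r_1, …, r_n and r̃_1, …, r̃_n respectively so that |r_k − r̃_k| ≤ 4 n C ε^{1/n} for every k. -/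
open Finset Polynomial

namespace OstAux

noncomputable def QQ (n : ℕ) (c : Fin n → ℂ) : Polynomial ℂ :=
  Polynomial.X ^ n + ∑ i : Fin n, Polynomial.C (c i) * Polynomial.X ^ (n - 1 - (i : ℕ))

variable {n : ℕ}

lemma degree_sum_lt (hn : 0 < n) (c : Fin n → ℂ) :
    (∑ i : Fin n, Polynomial.C (c i) * Polynomial.X ^ (n - 1 - (i : ℕ))).degree < (n : WithBot ℕ) := by
  apply lt_of_le_of_lt (Polynomial.degree_sum_le _ _)
  rw [Finset.sup_lt_iff (by exact_mod_cast WithBot.bot_lt_coe n)]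
  intro i _
  apply lt_of_le_of_lt (Polynomial.degree_C_mul_X_pow_le _ _)
  exact_mod_cast Nat.lt_of_le_of_lt (Nat.sub_le _ _) (Nat.sub_lt hn one_pos)

lemma monic_QQ (hn : 0 < n) (c : Fin n → ℂ) : (QQ n c).Monic :=
  Polynomial.monic_X_pow_add (degree_sum_lt hn c)

lemma natDegree_QQ (hn : 0 < n) (c : Fin n → ℂ) : (QQ n c).natDegree = n := by
  have h : (QQ n c).degree = n := by
    rw [QQ, Polynomial.degree_add_eq_left_of_degree_lt]
    · exact Polynomial.degree_X_pow n
    · rw [Polynomial.degree_X_pow]; exact degree_sum_lt hn c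
  exact Polynomial.natDegree_eq_of_degree_eq_some h

lemma card_roots_QQ (hn : 0 < n) (c : Fin n → ℂ) : Multiset.card (QQ n c).roots = n := by
  have h := Polynomial.splits_iff_card_roots.mp
    (IsAlgClosed.splits (QQ n c))
  rwa [natDegree_QQ hn c] at h

lemma eval_QQ (c : Fin n → ℂ) (z : ℂ) :
    (QQ n c).eval z = z ^ n + ∑ i : Fin n, c i * z ^ (n - 1 - (i : ℕ)) := by
  simp [QQ, Polynomial.eval_finset_sum]

lemma exists_enum {α : Type*} (M : Multiset α) {m : ℕ} (h : Multiset.card M = m) :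
    ∃ f : Fin m → α, M = Multiset.map f Finset.univ.val := by
  subst h
  refine ⟨fun i => M.toList.get (Fin.cast (M.length_toList).symm i), ?_⟩
  rw [Fin.univ_val_map]
  conv_lhs => rw [← M.coe_toList]
  congr 1
  apply List.ext_get
  · simp
  · intro i h1 h2
    simp [List.get_ofFn]

lemma abs_root_le (hn : 0 < n) {c : Fin n → ℂ} {Cv : ℝ} (hCv : 1 ≤ Cv)
    (hc : ∀ i : Fin n, ‖c i‖ ≤ Cv ^ ((i : ℕ) + 1))
    {z : ℂ} (hz : (QQ n c).IsRoot z) : ‖z‖ ≤ 2 * Cv := by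
  by_contra h
  push_neg at h
  have hz2 : (0:ℝ) < 2 * Cv := by linarith
  have hz0 : (0:ℝ) < ‖z‖ := lt_trans hz2 h
  have he : z ^ n = -∑ i : Fin n, c i * z ^ (n - 1 - (i : ℕ)) := by
    have h0 := hz
    rw [Polynomial.IsRoot, eval_QQ] at h0
    linear_combination h0
  have h1 : ‖z‖ ^ n ≤ ∑ i : Fin n, ‖c i‖ * ‖z‖ ^ (n - 1 - (i : ℕ)) := by
    calc ‖z‖ ^ n = ‖z ^ n‖ := (norm_pow z n).symm
    _ = ‖∑ i : Fin n, c i * z ^ (n - 1 - (i : ℕ))‖ := by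
        rw [he, norm_neg]
    _ ≤ ∑ i : Fin n, ‖c i * z ^ (n - 1 - (i : ℕ))‖ :=
        norm_sum_le _ _
    _ = ∑ i : Fin n, ‖c i‖ * ‖z‖ ^ (n - 1 - (i : ℕ)) := by
        simp [map_mul, map_pow]
  have h2 : ∀ i : Fin n, ‖c i‖ * ‖z‖ ^ (n - 1 - (i : ℕ))
      < ‖z‖ ^ n * (1/2 : ℝ) ^ ((i : ℕ) + 1) := by
    intro i
    have hpow : ‖c i‖ < (‖z‖ / 2) ^ ((i : ℕ) + 1) := by
      apply lt_of_le_of_lt (hc i)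
      apply pow_lt_pow_left₀ _ (by linarith) (Nat.succ_ne_zero _)
      linarith
    have hsplit : ‖z‖ ^ n
        = ‖z‖ ^ ((i : ℕ) + 1) * ‖z‖ ^ (n - 1 - (i : ℕ)) := by
      rw [← pow_add]
      congr 1
      omega
    calc ‖c i‖ * ‖z‖ ^ (n - 1 - (i : ℕ))
        < (‖z‖ / 2) ^ ((i : ℕ) + 1) * ‖z‖ ^ (n - 1 - (i : ℕ)) := by
          apply mul_lt_mul_of_pos_right hpow (by positivity)
    _ = ‖z‖ ^ n * (1/2 : ℝ) ^ ((i : ℕ) + 1) := by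
          rw [div_pow, hsplit, one_div_pow]; ring
  have h3 : ∑ i : Fin n, ‖c i‖ * ‖z‖ ^ (n - 1 - (i : ℕ))
      < ∑ i : Fin n, ‖z‖ ^ n * (1/2 : ℝ) ^ ((i : ℕ) + 1) :=
    Finset.sum_lt_sum_of_nonempty (Finset.univ_nonempty_iff.mpr ⟨⟨0, hn⟩⟩) (fun i _ => h2 i)
  have h4 : ∑ i : Fin n, ‖z‖ ^ n * (1/2 : ℝ) ^ ((i : ℕ) + 1) ≤ ‖z‖ ^ n := by
    rw [← Finset.mul_sum]
    have hgeom : ∑ i : Fin n, (1/2 : ℝ) ^ ((i : ℕ) + 1) ≤ 1 := by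
      rw [Fin.sum_univ_eq_sum_range (fun j => (1/2 : ℝ) ^ (j + 1))]
      have : ∀ j, (1/2 : ℝ) ^ (j+1) = (1/2 : ℝ) ^ j * (1/2) := fun j => pow_succ _ _
      rw [Finset.sum_congr rfl (fun j _ => this j), ← Finset.sum_mul]
      have := sum_geometric_two_le n
      linarith
    nlinarith [pow_pos hz0 n]
  linarith
lemma eval_diff_bound (hn : 0 < n) {Cv : ℝ} (hCv : 1 ≤ Cv) {z : ℂ}
    (hz : ‖z‖ ≤ 2 * Cv) (d : Fin n → ℂ) :
    ‖∑ i : Fin n, d i * z ^ (n - 1 - (i : ℕ))‖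
      ≤ Real.sqrt (∑ i : Fin n, ‖d i‖ ^ 2) * ((2 * Cv) ^ n / Real.sqrt 3) := by
  have hCv0 : (0:ℝ) < 2 * Cv := by linarith
  have habs0 : (0:ℝ) ≤ ‖z‖ := norm_nonneg z
  have step1 : ‖∑ i : Fin n, d i * z ^ (n - 1 - (i : ℕ))‖
      ≤ ∑ i : Fin n, ‖d i‖ * (2 * Cv) ^ (n - 1 - (i : ℕ)) := by
    apply le_trans (norm_sum_le _ _)
    apply Finset.sum_le_sum
    intro i _
    rw [norm_mul, norm_pow]
    exact mul_le_mul_of_nonneg_left (pow_le_pow_left₀ habs0 hz _) (norm_nonneg _)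
  have step2 : ∑ i : Fin n, ‖d i‖ * (2 * Cv) ^ (n - 1 - (i : ℕ))
      ≤ Real.sqrt (∑ i : Fin n, ‖d i‖ ^ 2)
        * Real.sqrt (∑ i : Fin n, ((2 * Cv) ^ (n - 1 - (i : ℕ))) ^ 2) := by
    have hS : (0:ℝ) ≤ ∑ i : Fin n, ‖d i‖ * (2 * Cv) ^ (n - 1 - (i : ℕ)) :=
      Finset.sum_nonneg fun i _ => mul_nonneg (norm_nonneg _) (by positivity)
    have hcs := Finset.sum_mul_sq_le_sq_mul_sq Finset.univ
      (fun i : Fin n => ‖d i‖) (fun i : Fin n => (2 * Cv) ^ (n - 1 - (i : ℕ)))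
    calc ∑ i : Fin n, ‖d i‖ * (2 * Cv) ^ (n - 1 - (i : ℕ))
        = Real.sqrt ((∑ i : Fin n, ‖d i‖ * (2 * Cv) ^ (n - 1 - (i : ℕ)))^2) :=
          (Real.sqrt_sq hS).symm
    _ ≤ _ := by
        rw [← Real.sqrt_mul (Finset.sum_nonneg fun i _ => sq_nonneg _)]
        exact Real.sqrt_le_sqrt hcs
  have hgeom : ∑ i : Fin n, ((1:ℝ)/4) ^ ((i : ℕ) + 1) ≤ 1/3 := by
    rw [Fin.sum_univ_eq_sum_range (fun j => ((1:ℝ)/4) ^ (j + 1))]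
    have hg : ∑ j ∈ Finset.range n, ((1:ℝ)/4) ^ j ≤ 4/3 := by
      rw [geom_sum_eq (by norm_num : ((1:ℝ)/4) ≠ 1)]
      have h1 : (0:ℝ) ≤ ((1:ℝ)/4) ^ n := by positivity
      rw [div_le_iff_of_neg (by norm_num : ((1:ℝ)/4 - 1) < 0)]
      linarith
    have : ∀ j, ((1:ℝ)/4) ^ (j+1) = ((1:ℝ)/4) ^ j * (1/4) := fun j => pow_succ _ _
    rw [Finset.sum_congr rfl (fun j _ => this j), ← Finset.sum_mul]
    linarith
  have step3 : ∑ i : Fin n, ((2 * Cv) ^ (n - 1 - (i : ℕ))) ^ 2 ≤ ((2 * Cv) ^ n) ^ 2 / 3 := by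
    have hterm : ∀ i : Fin n, ((2 * Cv) ^ (n - 1 - (i : ℕ))) ^ 2
        ≤ ((2 * Cv) ^ n) ^ 2 * (1/4 : ℝ) ^ ((i : ℕ) + 1) := by
      intro i
      have hsplit : ((2 * Cv) ^ n) ^ 2
          = ((2 * Cv) ^ (n - 1 - (i : ℕ))) ^ 2 * ((2 * Cv) ^ ((i : ℕ) + 1)) ^ 2 := by
        rw [← mul_pow, ← pow_add]
        congr 2
        omega
      have h4 : (4:ℝ) ^ ((i : ℕ) + 1) ≤ ((2 * Cv) ^ ((i : ℕ) + 1)) ^ 2 := by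
        rw [← pow_mul, show (4:ℝ) = 2^2 by norm_num, ← pow_mul, mul_comm ((i:ℕ)+1) 2]
        apply pow_le_pow_left₀ (by norm_num)
        linarith
      calc ((2 * Cv) ^ (n - 1 - (i : ℕ))) ^ 2
          = ((2 * Cv) ^ (n - 1 - (i : ℕ))) ^ 2 * ((4:ℝ) ^ ((i:ℕ)+1) * ((1:ℝ)/4) ^ ((i:ℕ)+1)) := by
            rw [← mul_pow]
            norm_num
      _ ≤ ((2 * Cv) ^ (n - 1 - (i : ℕ))) ^ 2 * (((2 * Cv) ^ ((i : ℕ) + 1)) ^ 2 * ((1:ℝ)/4) ^ ((i:ℕ)+1)) := by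
            apply mul_le_mul_of_nonneg_left _ (by positivity)
            exact mul_le_mul_of_nonneg_right h4 (by positivity)
      _ = ((2 * Cv) ^ n) ^ 2 * (1/4 : ℝ) ^ ((i : ℕ) + 1) := by rw [hsplit]; ring
    calc ∑ i : Fin n, ((2 * Cv) ^ (n - 1 - (i : ℕ))) ^ 2
        ≤ ∑ i : Fin n, ((2 * Cv) ^ n) ^ 2 * (1/4 : ℝ) ^ ((i : ℕ) + 1) :=
          Finset.sum_le_sum fun i _ => hterm i
    _ = ((2 * Cv) ^ n) ^ 2 * ∑ i : Fin n, (1/4 : ℝ) ^ ((i : ℕ) + 1) := by rw [← Finset.mul_sum]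
    _ ≤ ((2 * Cv) ^ n) ^ 2 / 3 := by
        have h0 : (0:ℝ) ≤ ((2 * Cv) ^ n) ^ 2 := sq_nonneg _
        nlinarith
  have step4 : Real.sqrt (∑ i : Fin n, ((2 * Cv) ^ (n - 1 - (i : ℕ))) ^ 2)
      ≤ (2 * Cv) ^ n / Real.sqrt 3 := by
    apply le_trans (Real.sqrt_le_sqrt step3)
    rw [Real.sqrt_div (sq_nonneg _), Real.sqrt_sq (by positivity)]
  calc ‖∑ i : Fin n, d i * z ^ (n - 1 - (i : ℕ))‖
      ≤ Real.sqrt (∑ i : Fin n, ‖d i‖ ^ 2)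
        * Real.sqrt (∑ i : Fin n, ((2 * Cv) ^ (n - 1 - (i : ℕ))) ^ 2) := le_trans step1 step2
  _ ≤ _ := mul_le_mul_of_nonneg_left step4 (Real.sqrt_nonneg _)

lemma exists_close_root (hn : 0 < n) {p : Polynomial ℂ} {R : Fin n → ℂ}
    (hp : p = ∏ j : Fin n, (Polynomial.X - Polynomial.C (R j)))
    {z : ℂ} {δ : ℝ} (hδ : 0 ≤ δ) (h : ‖p.eval z‖ ≤ δ ^ n) :
    ∃ j, ‖z - R j‖ ≤ δ := by
  have hne : (Finset.univ : Finset (Fin n)).Nonempty := Finset.univ_nonempty_iff.mpr ⟨⟨0, hn⟩⟩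
  have habs : ‖p.eval z‖ = ∏ j : Fin n, ‖z - R j‖ := by
    rw [hp, Polynomial.eval_prod]
    rw [norm_prod]
    simp
  by_contra hcon
  push_neg at hcon
  rcases eq_or_lt_of_le hδ with h0 | h0
  · have hz : ‖p.eval z‖ = 0 := by
      have : δ ^ n = 0 := by rw [← h0]; exact zero_pow hn.ne'
      exact le_antisymm (this ▸ h) (norm_nonneg _)
    rw [habs] at hz
    obtain ⟨j, _, hj⟩ := Finset.prod_eq_zero_iff.mp hz
    exact absurd (hj.le.trans hδ) (not_le.mpr (h0 ▸ hcon j))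
  · have hlt : δ ^ n < ∏ j : Fin n, ‖z - R j‖ := by
      calc δ ^ n = ∏ _j : Fin n, δ := by simp [Finset.prod_const, Finset.card_univ]
      _ < _ := Finset.prod_lt_prod_of_nonempty (fun j _ => h0) (fun j _ => hcon j) hne
    rw [habs] at h
    linarith

lemma chain_dist {δ : ℝ} (hδ : 0 ≤ δ) (R : Fin n → ℂ) {i j : Fin n}
    (h : Relation.ReflTransGen (fun a b => dist (R a) (R b) ≤ 2 * δ) i j) :
    dist (R i) (R j) ≤ 2 * δ * ((n : ℝ) - 1) := by
  suffices H : ∃ s : Finset (Fin n), i ∈ s ∧ j ∈ s ∧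
      ∀ k ∈ s, dist (R i) (R k) ≤ 2 * δ * ((s.card : ℝ) - 1) by
    obtain ⟨s, hi, hj, hk⟩ := H
    refine le_trans (hk j hj) ?_
    have hcard : (s.card : ℝ) ≤ (n : ℝ) := by
      exact_mod_cast (Finset.card_le_card (Finset.subset_univ s)).trans_eq (by simp)
    nlinarith
  induction h with
  | refl => exact ⟨{i}, by simp, by simp, by simp⟩
  | @tail b c hab hbc ih =>
    obtain ⟨s, hi, hb, hk⟩ := ih
    by_cases hc : c ∈ s
    · exact ⟨s, hi, hc, hk⟩
    · refine ⟨insert c s, Finset.mem_insert_of_mem hi, Finset.mem_insert_self _ _, ?_⟩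
      have hcard : ((insert c s).card : ℝ) = (s.card : ℝ) + 1 := by
        rw [Finset.card_insert_of_notMem hc]; push_cast; ring
      intro k hk'
      rcases Finset.mem_insert.mp hk' with rfl | hks
      · calc dist (R i) (R k) ≤ dist (R i) (R b) + dist (R b) (R k) := dist_triangle _ _ _
        _ ≤ 2 * δ * ((s.card : ℝ) - 1) + 2 * δ := add_le_add (hk b hb) hbc
        _ = 2 * δ * (((insert k s).card : ℝ) - 1) := by rw [hcard]; ring
      · refine le_trans (hk k hks) ?_
        rw [hcard]
        nlinarith
lemma QQ_prod_of_enum (hn : 0 < n) {c : Fin n → ℂ} {R : Fin n → ℂ}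
    (hR : (QQ n c).roots = Multiset.map R Finset.univ.val) :
    QQ n c = ∏ j : Fin n, (Polynomial.X - Polynomial.C (R j)) := by
  have hm := monic_QQ hn c
  have := (IsAlgClosed.splits (QQ n c)).eq_prod_roots_of_monic hm
  rw [this, hR, Multiset.map_map, Finset.prod_eq_multiset_prod]
  rfl

lemma roots_of_tendsto (hn : 0 < n) {c : ℕ → Fin n → ℂ} {cl : Fin n → ℂ}
    (hc : ∀ i, Filter.Tendsto (fun k => c k i) Filter.atTop (nhds (cl i)))
    {v : ℕ → Fin n → ℂ} (hv : ∀ k, (QQ n (c k)).roots = Multiset.map (v k) Finset.univ.val)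
    {w : Fin n → ℂ} (hw : Filter.Tendsto v Filter.atTop (nhds w)) :
    (QQ n cl).roots = Multiset.map w Finset.univ.val := by
  have hprod : ∀ k, QQ n (c k) = ∏ j : Fin n, (Polynomial.X - Polynomial.C (v k j)) :=
    fun k => QQ_prod_of_enum hn (hv k)
  have heval : ∀ z : ℂ, (QQ n cl).eval z = ∏ j : Fin n, (z - w j) := by
    intro z
    have h1 : Filter.Tendsto (fun k => (QQ n (c k)).eval z) Filter.atTop
        (nhds ((QQ n cl).eval z)) := by
      simp only [eval_QQ]
      exact tendsto_const_nhds.add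
        (tendsto_finset_sum _ fun i _ => (hc i).mul_const _)
    have h2 : Filter.Tendsto (fun k => (QQ n (c k)).eval z) Filter.atTop
        (nhds (∏ j : Fin n, (z - w j))) := by
      have heq : ∀ k, (QQ n (c k)).eval z = ∏ j : Fin n, (z - v k j) := by
        intro k
        rw [hprod k, Polynomial.eval_prod]
        simp
      rw [show (fun k => (QQ n (c k)).eval z) = fun k => ∏ j : Fin n, (z - v k j) from
        funext heq]
      exact tendsto_finset_prod _ fun j _ =>
        tendsto_const_nhds.sub ((tendsto_pi_nhds.mp hw) j)
    exact tendsto_nhds_unique h1 h2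
  have hfun : QQ n cl = ∏ j : Fin n, (Polynomial.X - Polynomial.C (w j)) := by
    apply Polynomial.funext
    intro z
    rw [heval z, Polynomial.eval_prod]
    simp
  rw [hfun, Finset.prod_eq_multiset_prod]
  have : (Finset.univ.val.map fun j : Fin n => Polynomial.X - Polynomial.C (w j))
      = (Finset.univ.val.map w).map fun a => Polynomial.X - Polynomial.C a := by
    rw [Multiset.map_map]
    rfl
  rw [this, Polynomial.roots_multiset_prod_X_sub_C]

lemma map_multiset_sum {ι β γ : Type*} (s : Finset ι) (f : ι → Multiset β) (p : β → γ) :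
    Multiset.map p (∑ r ∈ s, f r) = ∑ r ∈ s, (f r).map p := by
  induction s using Finset.cons_induction with
  | empty => simp
  | cons a t ha ih => rw [Finset.sum_cons, Finset.sum_cons, Multiset.map_add, ih]

lemma master (n : ℕ) (hn : 0 < n) (φ ψ : Fin n → ℂ) (ε Cv : ℝ)
    (hCv : 1 ≤ Cv)
    (hφb : ∀ i : Fin n, ‖φ i‖ ≤ Cv ^ ((i : ℕ) + 1))
    (hψb : ∀ i : Fin n, ‖ψ i‖ ≤ Cv ^ ((i : ℕ) + 1))
    (hε : Real.sqrt (∑ i, ‖φ i - ψ i‖ ^ 2) ≤ ε) :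
    ∃ r rt : Fin n → ℂ, (QQ n φ).roots = Multiset.map r Finset.univ.val
      ∧ (QQ n ψ).roots = Multiset.map rt Finset.univ.val
      ∧ ∀ i, ‖r i - rt i‖ ≤ 4 * n * Cv * ε ^ ((1 : ℝ) / n) := by
  classical
  have hε0 : 0 ≤ ε := le_trans (Real.sqrt_nonneg _) hε
  have hCv0 : (0:ℝ) < Cv := lt_of_lt_of_le one_pos hCv
  have hn' : (n : ℝ) ≠ 0 := by exact_mod_cast hn.ne'
  set δ : ℝ := 2 * Cv * (ε / Real.sqrt 3) ^ ((1:ℝ)/n) with hδdef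
  have h3 : (0:ℝ) < Real.sqrt 3 := Real.sqrt_pos.mpr (by norm_num)
  have hδ0 : 0 ≤ δ := by
    apply mul_nonneg (by linarith)
    exact Real.rpow_nonneg (by positivity) _
  have hδn : δ ^ n = (2*Cv)^n * (ε / Real.sqrt 3) := by
    rw [hδdef, mul_pow, ← Real.rpow_natCast ((ε / Real.sqrt 3) ^ ((1:ℝ)/n)) n,
      ← Real.rpow_mul (by positivity), one_div, inv_mul_cancel₀ hn', Real.rpow_one]
  -- homotopy coefficients, clamped
  set proj : ℝ → ℝ := fun t => max 0 (min 1 t) with hproj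
  have hproj01 : ∀ t, 0 ≤ proj t ∧ proj t ≤ 1 :=
    fun t => ⟨le_max_left _ _, max_le (by norm_num) (min_le_left _ _)⟩
  set cf : ℝ → Fin n → ℂ := fun t i => φ i + (proj t : ℂ) * (ψ i - φ i) with hcf
  have hcf0 : cf 0 = φ := by
    funext i
    simp [hcf, hproj]
  have hcf1 : cf 1 = ψ := by
    funext i
    simp [hcf, hproj]
  have hcfb : ∀ t i, ‖cf t i‖ ≤ Cv ^ ((i : ℕ) + 1) := by
    intro t i
    obtain ⟨h0, h1⟩ := hproj01 t
    have heq : cf t i = (1 - (proj t : ℂ)) * φ i + (proj t : ℂ) * ψ i := by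
      simp only [hcf]; ring
    rw [heq]
    calc ‖(1 - (proj t : ℂ)) * φ i + (proj t : ℂ) * ψ i‖
        ≤ ‖(1 - (proj t : ℂ)) * φ i‖ + ‖(proj t : ℂ) * ψ i‖ :=
          norm_add_le _ _
    _ = (1 - proj t) * ‖φ i‖ + proj t * ‖ψ i‖ := by
        rw [norm_mul, norm_mul]
        congr 2
        · rw [show (1 - (proj t : ℂ)) = ((1 - proj t : ℝ) : ℂ) by push_cast; ring,
            Complex.norm_real, Real.norm_eq_abs, abs_of_nonneg (by linarith)]
        · rw [Complex.norm_real, Real.norm_eq_abs, abs_of_nonneg h0]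
    _ ≤ (1 - proj t) * Cv ^ ((i : ℕ) + 1) + proj t * Cv ^ ((i : ℕ) + 1) := by
        apply add_le_add
        · exact mul_le_mul_of_nonneg_left (hφb i) (by linarith)
        · exact mul_le_mul_of_nonneg_left (hψb i) h0
    _ = Cv ^ ((i : ℕ) + 1) := by ring
  have hroots_card : ∀ t : ℝ, Multiset.card ((QQ n (cf t)).roots) = n :=
    fun t => card_roots_QQ hn _
  have hrootbound : ∀ t z, z ∈ (QQ n (cf t)).roots → ‖z‖ ≤ 2*Cv := by
    intro t z hz
    exact abs_root_le hn hCv (hcfb t) (Polynomial.isRoot_of_mem_roots hz)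
  -- key evaluation bound: every root of any P t is δ-close in Φ-value
  have hkey : ∀ t z, z ∈ (QQ n (cf t)).roots → ‖(QQ n (cf 0)).eval z‖ ≤ δ ^ n := by
    intro t z hz
    have hzb := hrootbound t z hz
    have hzr : (QQ n (cf t)).eval z = 0 := Polynomial.isRoot_of_mem_roots hz
    have hdiff : (QQ n (cf 0)).eval z
        = ∑ i : Fin n, (cf 0 i - cf t i) * z ^ (n - 1 - (i : ℕ)) := by
      rw [eval_QQ]
      have hsum : ∑ i : Fin n, cf 0 i * z ^ (n - 1 - (i : ℕ))
          = ∑ i : Fin n, (cf t i * z ^ (n - 1 - (i : ℕ))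
            + (cf 0 i - cf t i) * z ^ (n - 1 - (i : ℕ))) :=
        Finset.sum_congr rfl (fun i _ => by ring)
      rw [hsum, Finset.sum_add_distrib, ← add_assoc]
      rw [eval_QQ] at hzr
      rw [hzr, zero_add]
    have hd : ∀ i, cf 0 i - cf t i = (proj t : ℂ) * (φ i - ψ i) := by
      intro i
      rw [congrFun hcf0 i]
      simp only [hcf]
      ring
    rw [hdiff]
    apply le_trans (eval_diff_bound hn hCv hzb _)
    have hsq : ∑ i : Fin n, ‖cf 0 i - cf t i‖ ^ 2
        = (proj t)^2 * ∑ i : Fin n, ‖φ i - ψ i‖ ^ 2 := by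
      rw [Finset.mul_sum]
      apply Finset.sum_congr rfl
      intro i _
      rw [hd i, norm_mul, Complex.norm_real, Real.norm_eq_abs, abs_of_nonneg (hproj01 t).1]
      ring
    have h1 : Real.sqrt (∑ i : Fin n, ‖cf 0 i - cf t i‖ ^ 2) ≤ ε := by
      rw [hsq, Real.sqrt_mul (sq_nonneg _), Real.sqrt_sq (hproj01 t).1]
      calc proj t * Real.sqrt (∑ i : Fin n, ‖φ i - ψ i‖ ^ 2)
          ≤ 1 * ε := mul_le_mul (hproj01 t).2 hε (Real.sqrt_nonneg _) (by norm_num)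
      _ = ε := one_mul ε
    calc Real.sqrt (∑ i : Fin n, ‖cf 0 i - cf t i‖ ^ 2) * ((2*Cv)^n / Real.sqrt 3)
        ≤ ε * ((2*Cv)^n / Real.sqrt 3) := by
          apply mul_le_mul_of_nonneg_right h1 (by positivity)
    _ = δ ^ n := by rw [hδn]; ring
  obtain ⟨R, hR⟩ := exists_enum ((QQ n (cf 0)).roots) (hroots_card 0)
  have hP0prod : QQ n (cf 0) = ∏ j : Fin n, (Polynomial.X - Polynomial.C (R j)) :=
    QQ_prod_of_enum hn hR
  have hnear : ∀ t z, z ∈ (QQ n (cf t)).roots → ∃ j, dist z (R j) ≤ δ := by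
    intro t z hz
    obtain ⟨j, hj⟩ := exists_close_root hn hP0prod hδ0 (hkey t z hz)
    exact ⟨j, by rwa [Complex.dist_eq]⟩
  set Rel : Fin n → Fin n → Prop := fun a b => dist (R a) (R b) ≤ 2*δ with hRel
  set E : Fin n → Fin n → Prop := Relation.ReflTransGen Rel with hE
  have hRelsymm : Symmetric Rel := by
    intro a b hab
    simp only [hRel] at hab ⊢
    rwa [dist_comm]
  have hEsymm : ∀ {a b}, E a b → E b a := fun h =>
    (@Relation.ReflTransGen.stdSymm _ _ ⟨fun a b h => hRelsymm h⟩).symm _ _ h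
  have hEtrans : ∀ {a b c}, E a b → E b c → E a c := fun h1 h2 =>
    Relation.ReflTransGen.trans h1 h2
  set Q : Fin n → ℂ → Prop := fun i z => ∃ j, E i j ∧ dist z (R j) ≤ δ with hQ
  set N : Fin n → ℝ → ℕ :=
    fun i t => Multiset.countP (Q i) ((QQ n (cf t)).roots) with hN
  -- the separation gap
  set bad : Finset (Fin n × Fin n) := Finset.univ.filter (fun p => ¬ E p.1 p.2) with hbad
  set gap : ℝ := if h : bad.Nonempty
    then (bad.inf' h fun p => dist (R p.1) (R p.2)) - 2*δ else 1 with hgapdef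
  have hgap0 : 0 < gap := by
    rw [hgapdef]
    split_ifs with h
    · rw [sub_pos, Finset.lt_inf'_iff]
      intro p hp
      have hnr : ¬ Rel p.1 p.2 :=
        fun hr => (Finset.mem_filter.mp hp).2 (Relation.ReflTransGen.single hr)
      exact lt_of_not_ge hnr
    · norm_num
  have hgapE : ∀ a b, dist (R a) (R b) < 2*δ + gap → E a b := by
    intro a b hab
    by_contra hne
    have hmem : (a,b) ∈ bad := Finset.mem_filter.mpr ⟨Finset.mem_univ _, hne⟩
    have hbne : bad.Nonempty := ⟨_, hmem⟩
    rw [hgapdef, dif_pos hbne] at hab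
    have hle := Finset.inf'_le (fun p => dist (R p.1) (R p.2)) hmem
    simp only at hle
    linarith
  -- local constancy of the near-cluster root counts
  have hLC : ∀ (i : Fin n) (t : ℝ), ∃ η > 0, ∀ s, |s - t| < η → N i s = N i t := by
    intro i t
    by_contra hcon
    push_neg at hcon
    choose u hu1 hu2 using fun k : ℕ => hcon (1/(k+1)) (by positivity)
    have hut : Filter.Tendsto u Filter.atTop (nhds t) := by
      rw [tendsto_iff_dist_tendsto_zero]
      apply squeeze_zero (fun k => dist_nonneg)
        (g := fun k : ℕ => 1/((k:ℝ)+1))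
        (fun k => by rw [Real.dist_eq]; exact (hu1 k).le)
      exact_mod_cast tendsto_one_div_add_atTop_nhds_zero_nat (𝕜 := ℝ)
    choose v hv using fun k => exists_enum ((QQ n (cf (u k))).roots) (hroots_card (u k))
    have hvb : ∀ k, v k ∈ Metric.closedBall (0 : Fin n → ℂ) (2*Cv) := by
      intro k
      rw [Metric.mem_closedBall, dist_zero_right, pi_norm_le_iff_of_nonneg (by linarith)]
      intro j
      have hmem : v k j ∈ (QQ n (cf (u k))).roots := by
        rw [hv k]
        exact Multiset.mem_map_of_mem _ (Finset.mem_univ_val j)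
      simpa using hrootbound (u k) _ hmem
    obtain ⟨w, hwS, g, hg, hwt⟩ :=
      (isCompact_closedBall (0 : Fin n → ℂ) (2*Cv)).tendsto_subseq hvb
    have hproj_cont : Continuous proj :=
      continuous_const.max (continuous_const.min continuous_id)
    have hug : Filter.Tendsto (fun k => u (g k)) Filter.atTop (nhds t) :=
      hut.comp hg.tendsto_atTop
    have hcf_tend : ∀ j : Fin n,
        Filter.Tendsto (fun k => cf (u (g k)) j) Filter.atTop (nhds (cf t j)) := by
      intro j
      have h2 : Filter.Tendsto (fun k => proj (u (g k))) Filter.atTop (nhds (proj t)) :=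
        (hproj_cont.tendsto t).comp hug
      have h3 : Filter.Tendsto (fun k => ((proj (u (g k)) : ℂ))) Filter.atTop
          (nhds ((proj t : ℂ))) := (Complex.continuous_ofReal.tendsto _).comp h2
      simp only [hcf]
      exact tendsto_const_nhds.add (h3.mul tendsto_const_nhds)
    have hwroots : (QQ n (cf t)).roots = Multiset.map w Finset.univ.val :=
      roots_of_tendsto hn hcf_tend (fun k => hv (g k)) hwt
    have hcoord : ∀ᶠ k in Filter.atTop, dist (v (g k)) w < gap :=
      (Metric.tendsto_nhds.mp hwt) gap hgap0
    obtain ⟨k, hk⟩ := hcoord.exists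
    have hiff : ∀ j : Fin n, Q i (v (g k) j) = Q i (w j) := by
      intro j
      have hdj : dist (v (g k) j) (w j) < gap := lt_of_le_of_lt (dist_le_pi_dist _ _ j) hk
      have hvroot : v (g k) j ∈ (QQ n (cf (u (g k)))).roots := by
        rw [hv (g k)]
        exact Multiset.mem_map_of_mem _ (Finset.mem_univ_val j)
      have hwroot : w j ∈ (QQ n (cf t)).roots := by
        rw [hwroots]
        exact Multiset.mem_map_of_mem _ (Finset.mem_univ_val j)
      obtain ⟨j₁, hj₁⟩ := hnear _ _ hvroot
      obtain ⟨j₂, hj₂⟩ := hnear _ _ hwroot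
      apply propext
      constructor
      · rintro ⟨j', hEij', hd⟩
        refine ⟨j₂, hEtrans hEij' (hgapE _ _ ?_), hj₂⟩
        calc dist (R j') (R j₂)
            ≤ dist (R j') (v (g k) j) + dist (v (g k) j) (w j) + dist (w j) (R j₂) :=
              dist_triangle4 _ _ _ _
        _ < δ + gap + δ := by
            rw [dist_comm (R j') (v (g k) j)]
            linarith [hdj, hj₂, hd]
        _ = 2*δ + gap := by ring
      · rintro ⟨j', hEij', hd⟩
        refine ⟨j₁, hEtrans hEij' (hgapE _ _ ?_), hj₁⟩
        calc dist (R j') (R j₁)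
            ≤ dist (R j') (w j) + dist (w j) (v (g k) j) + dist (v (g k) j) (R j₁) :=
              dist_triangle4 _ _ _ _
        _ < δ + gap + δ := by
            rw [dist_comm (R j') (w j), dist_comm (w j) (v (g k) j)]
            linarith [hd, hdj, hj₁]
        _ = 2*δ + gap := by ring
    have heqN : N i (u (g k)) = N i t := by
      simp only [hN]
      rw [hv (g k), hwroots, Multiset.countP_map, Multiset.countP_map]
      simp only [hiff]
    exact hu2 (g k) heqN
  -- counts at the two endpoints agree
  have hN01 : ∀ i : Fin n, N i 0 = N i 1 := by
    intro i
    have hlc : IsLocallyConstant (N i) := by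
      rw [IsLocallyConstant.iff_eventually_eq]
      intro t
      obtain ⟨η, hη, hs⟩ := hLC i t
      rw [Metric.eventually_nhds_iff]
      exact ⟨η, hη, fun {s} hst => hs s (by rwa [Real.dist_eq] at hst)⟩
    exact hlc.apply_eq_of_preconnectedSpace 0 1
  -- class representatives
  have hfilterE : ∀ i : Fin n, (Finset.univ.filter (E i)).Nonempty :=
    fun i => ⟨i, Finset.mem_filter.mpr ⟨Finset.mem_univ _, Relation.ReflTransGen.refl⟩⟩
  set mrep : Fin n → Fin n := fun i => (Finset.univ.filter (E i)).min' (hfilterE i) with hmrep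
  have hmrep_mem : ∀ i, E i (mrep i) :=
    fun i => (Finset.mem_filter.mp ((Finset.univ.filter (E i)).min'_mem (hfilterE i))).2
  have hmrep_eq : ∀ {a b}, E a b → mrep a = mrep b := by
    intro a b hab
    have hset : Finset.univ.filter (E a) = Finset.univ.filter (E b) := by
      ext x
      simp only [Finset.mem_filter, Finset.mem_univ, true_and]
      exact ⟨fun hax => hEtrans (hEsymm hab) hax, fun hbx => hEtrans hab hbx⟩
    simp only [hmrep]
    congr 1
  have hmrep_idem : ∀ i, mrep (mrep i) = mrep i := fun i => (hmrep_eq (hmrep_mem i)).symm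
  set reps : Finset (Fin n) := Finset.univ.image mrep with hreps
  have hreps_fix : ∀ r ∈ reps, mrep r = r := by
    intro r hr
    obtain ⟨x, _, rfl⟩ := Finset.mem_image.mp hr
    exact hmrep_idem x
  have hQrep : ∀ (z : ℂ) (j : Fin n), dist z (R j) ≤ δ → Q (mrep j) z :=
    fun z j h => ⟨j, hEsymm (hmrep_mem j), h⟩
  have hQuniq : ∀ (z : ℂ) (a b : Fin n), Q a z → Q b z → mrep a = mrep b := by
    rintro z a b ⟨ja, hEa, hda⟩ ⟨jb, hEb, hdb⟩
    have hd : dist (R ja) (R jb) ≤ 2*δ := by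
      calc dist (R ja) (R jb) ≤ dist (R ja) z + dist z (R jb) := dist_triangle _ _ _
      _ ≤ δ + δ := add_le_add (by rwa [dist_comm] at hda) hdb
      _ = 2*δ := by ring
    calc mrep a = mrep ja := hmrep_eq hEa
    _ = mrep jb := hmrep_eq (Relation.ReflTransGen.single hd)
    _ = mrep b := (hmrep_eq hEb).symm
  -- the Q-filters partition any multiset of near roots
  have hpartition : ∀ (s : Multiset ℂ), (∀ z ∈ s, ∃ j, dist z (R j) ≤ δ) →
      ∑ r ∈ reps, s.filter (Q r) = s := by
    intro s hs
    ext a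
    rw [Multiset.count_sum']
    by_cases ha : a ∈ s
    · obtain ⟨j, hj⟩ := hs a ha
      have hQa : Q (mrep j) a := hQrep a j hj
      rw [Finset.sum_eq_single (mrep j)]
      · rw [Multiset.count_filter_of_pos hQa]
      · intro r hr hrne
        rw [Multiset.count_filter_of_neg]
        intro hQra
        exact hrne ((hreps_fix r hr).symm.trans (hQuniq a r (mrep j) hQra hQa)
          |>.trans (hmrep_idem j))
      · intro hnot
        exact absurd (Finset.mem_image_of_mem mrep (Finset.mem_univ j)) hnot
    · have hz : Multiset.count a s = 0 := Multiset.count_eq_zero_of_notMem ha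
      rw [hz]
      apply Finset.sum_eq_zero
      intro r _
      rw [Multiset.count_filter]
      split_ifs
      · exact hz
      · rfl
  -- build the multiset of matched pairs
  set A : Fin n → Multiset ℂ := fun r => ((QQ n (cf 0)).roots).filter (Q r) with hA
  set B : Fin n → Multiset ℂ := fun r => ((QQ n (cf 1)).roots).filter (Q r) with hB
  have hlenAB : ∀ r, (A r).toList.length = (B r).toList.length := by
    intro r
    rw [Multiset.length_toList, Multiset.length_toList, hA, hB]
    have hnn := hN01 r
    simp only [hN] at hnn
    rw [Multiset.countP_eq_card_filter, Multiset.countP_eq_card_filter] at hnn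
    exact hnn
  set M : Multiset (ℂ × ℂ) :=
    ∑ r ∈ reps, (((A r).toList.zip ((B r).toList) : List (ℂ × ℂ)) : Multiset (ℂ × ℂ)) with hM
  have hMfst : M.map Prod.fst = (QQ n (cf 0)).roots := by
    rw [hM, map_multiset_sum]
    have : ∀ r ∈ reps, (((A r).toList.zip ((B r).toList) : List (ℂ × ℂ)) :
        Multiset (ℂ × ℂ)).map Prod.fst = A r := by
      intro r _
      rw [Multiset.map_coe, List.map_fst_zip (le_of_eq (hlenAB r))]
      exact Multiset.coe_toList _
    rw [Finset.sum_congr rfl this]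
    exact hpartition _ (fun z hz => hnear 0 z hz)
  have hMsnd : M.map Prod.snd = (QQ n (cf 1)).roots := by
    rw [hM, map_multiset_sum]
    have : ∀ r ∈ reps, (((A r).toList.zip ((B r).toList) : List (ℂ × ℂ)) :
        Multiset (ℂ × ℂ)).map Prod.snd = B r := by
      intro r _
      rw [Multiset.map_coe, List.map_snd_zip (ge_of_eq (hlenAB r))]
      exact Multiset.coe_toList _
    rw [Finset.sum_congr rfl this]
    exact hpartition _ (fun z hz => hnear 1 z hz)
  have hMcard : Multiset.card M = n := by
    have := congrArg Multiset.card hMfst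
    rwa [Multiset.card_map, hroots_card 0] at this
  obtain ⟨e, he⟩ := exists_enum M hMcard
  refine ⟨fun i => (e i).1, fun i => (e i).2, ?_, ?_, ?_⟩
  · rw [← hcf0, ← hMfst, he, Multiset.map_map]
    rfl
  · rw [← hcf1, ← hMsnd, he, Multiset.map_map]
    rfl
  · intro i
    have hei : e i ∈ M := by
      rw [he]
      exact Multiset.mem_map_of_mem _ (Finset.mem_univ_val i)
    rw [hM] at hei
    obtain ⟨r, hr, hmem⟩ := Multiset.mem_sum.mp hei
    have hmem' : ((e i).1, (e i).2) ∈ ((A r).toList.zip ((B r).toList)) := by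
      rw [Prod.mk.eta]
      exact_mod_cast hmem
    obtain ⟨h1, h2⟩ := List.of_mem_zip hmem'
    have h1' : (e i).1 ∈ A r := Multiset.mem_toList.mp h1
    have h2' : (e i).2 ∈ B r := Multiset.mem_toList.mp h2
    obtain ⟨hroot1, hQ1⟩ := Multiset.mem_filter.mp h1'
    obtain ⟨hroot2, hQ2⟩ := Multiset.mem_filter.mp h2'
    obtain ⟨j₁, hEj₁, hd₁⟩ := hQ1
    obtain ⟨j₂, hEj₂, hd₂⟩ := hQ2
    have hEj : E j₁ j₂ := hEtrans (hEsymm hEj₁) hEj₂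
    have hdRR : dist (R j₁) (R j₂) ≤ 2 * δ * ((n : ℝ) - 1) := chain_dist hδ0 R hEj
    have htotal : dist ((e i).1) ((e i).2) ≤ 2 * δ * (n : ℝ) := by
      calc dist ((e i).1) ((e i).2)
          ≤ dist ((e i).1) (R j₁) + dist (R j₁) (R j₂) + dist (R j₂) ((e i).2) :=
            dist_triangle4 _ _ _ _
      _ ≤ δ + 2 * δ * ((n : ℝ) - 1) + δ := by
          refine add_le_add (add_le_add hd₁ hdRR) ?_
          rwa [dist_comm] at hd₂
      _ = 2 * δ * (n : ℝ) := by ring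
    have hfinal : 2 * δ * (n : ℝ) ≤ 4 * n * Cv * ε ^ ((1:ℝ)/n) := by
      have h1 : (ε / Real.sqrt 3) ^ ((1:ℝ)/n) ≤ ε ^ ((1:ℝ)/n) := by
        apply Real.rpow_le_rpow (by positivity) _ (by positivity)
        apply div_le_self hε0
        have : (1:ℝ) ≤ Real.sqrt 3 := by
          rw [show (1:ℝ) = Real.sqrt 1 by simp]
          exact Real.sqrt_le_sqrt (by norm_num)
        linarith
      rw [hδdef]
      calc 2 * (2 * Cv * (ε / Real.sqrt 3) ^ ((1:ℝ)/n)) * (n:ℝ)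
          = 4 * n * Cv * (ε / Real.sqrt 3) ^ ((1:ℝ)/n) := by ring
      _ ≤ 4 * n * Cv * ε ^ ((1:ℝ)/n) := by
          apply mul_le_mul_of_nonneg_left h1 (by positivity)
    rw [← Complex.dist_eq]
    exact le_trans htotal hfinal

end OstAux

/-- **Ostrowski's root perturbation bound.**
Let `Φ(z) = z^n + φ₁ z^(n-1) + ⋯ + φₙ` and `Ψ(z) = z^n + ψ₁ z^(n-1) + ⋯ + ψₙ`
be monic complex polynomials whose coefficient vectors are within ℓ2-distance
`ε`, and let `C = max({1} ∪ {|φ_k|^(1/k)} ∪ {|ψ_k|^(1/k)})`.  Then the roots of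
`Φ` and `Ψ` (with multiplicity) can be enumerated as `r` and `r̃` with
`|r_k − r̃_k| ≤ 4 n C ε^(1/n)` for every `k`. -/
theorem stmt4 (n : ℕ) (φ ψ : Fin n → ℂ) (ε Cv : ℝ)
    (hε : Real.sqrt (∑ i, ‖φ i - ψ i‖ ^ 2) ≤ ε)
    (hC : IsGreatest
      (insert (1 : ℝ)
        ((Set.range fun k : Fin n =>
            ‖φ k‖ ^ ((1 : ℝ) / ((k : ℕ) + 1)))
          ∪ (Set.range fun k : Fin n =>
            ‖ψ k‖ ^ ((1 : ℝ) / ((k : ℕ) + 1))))) Cv) :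
    ∃ r rt : Fin n → ℂ,
      (Polynomial.X ^ n
        + ∑ i : Fin n, Polynomial.C (φ i) * Polynomial.X ^ (n - 1 - (i : ℕ))).roots
          = Multiset.map r Finset.univ.val
      ∧ (Polynomial.X ^ n
        + ∑ i : Fin n, Polynomial.C (ψ i) * Polynomial.X ^ (n - 1 - (i : ℕ))).roots
          = Multiset.map rt Finset.univ.val
      ∧ ∀ i, ‖r i - rt i‖ ≤ 4 * n * Cv * ε ^ ((1 : ℝ) / n) := by
  rcases Nat.eq_zero_or_pos n with hn | hn
  · subst hn
    refine ⟨Fin.elim0, Fin.elim0, ?_, ?_, fun i => Fin.elim0 i⟩ <;>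
      simp [Finset.univ_eq_empty]
  · have hCv1 : (1:ℝ) ≤ Cv := hC.2 (Set.mem_insert _ _)
    have key : ∀ (c : Fin n → ℂ), (∀ k : Fin n,
          ‖c k‖ ^ ((1 : ℝ) / ((k : ℕ) + 1)) ≤ Cv) →
        ∀ i : Fin n, ‖c i‖ ≤ Cv ^ ((i : ℕ) + 1) := by
      intro c hc i
      have h0 : (0:ℝ) ≤ ‖c i‖ := norm_nonneg _
      have hne : (((i : ℕ) : ℝ) + 1) ≠ 0 := by positivity
      calc ‖c i‖
          = (‖c i‖ ^ ((1 : ℝ) / ((i : ℕ) + 1))) ^ ((i : ℕ) + 1) := by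
            rw [← Real.rpow_natCast (‖c i‖ ^ ((1 : ℝ) / ((i : ℕ) + 1))) ((i:ℕ)+1),
              ← Real.rpow_mul h0]
            push_cast
            rw [one_div, inv_mul_cancel₀ hne, Real.rpow_one]
      _ ≤ Cv ^ ((i : ℕ) + 1) := pow_le_pow_left₀ (Real.rpow_nonneg h0 _) (hc i) _
    have hφb := key φ (fun k => hC.2 (Set.mem_insert_of_mem _ (Set.mem_union_left _ ⟨k, rfl⟩)))
    have hψb := key ψ (fun k => hC.2 (Set.mem_insert_of_mem _ (Set.mem_union_right _ ⟨k, rfl⟩)))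
    obtain ⟨r, rt, h1, h2, h3⟩ := OstAux.master n hn φ ψ ε Cv hCv1 hφb hψb hε
    exact ⟨r, rt, h1, h2, h3⟩
end

section
/- Let P be a monic complex polynomial of degree n and let λ₀ be a simple root of P (a root of multiplicity exactly 1). Then there exist δ > 0 and K > 0 such that every monic complex polynomial Q of degree n whose coefficient vector lies within ℓ2-distance δ of the coefficient vector of P has a root r ∈ ℂ with |r − λ₀| ≤ K · ‖Q − P‖₂, where ‖Q − P‖₂ denotes the ℓ2 distance of the coefficient vectors. -/
open Finset Polynomial

/-- Auxiliary: in a multiset of reals each `≥ a ≥ 0`, the product is at least `a ^ card`. -/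
lemma aux_pow_card_le_prod (s : Multiset ℝ) (a : ℝ) (ha : 0 ≤ a)
    (h : ∀ x ∈ s, a ≤ x) : a ^ Multiset.card s ≤ s.prod := by
  induction s using Multiset.induction with
  | empty => simp
  | cons x t ih =>
      have hx : a ≤ x := h x (Multiset.mem_cons_self x t)
      have ht : ∀ y ∈ t, a ≤ y := fun y hy => h y (Multiset.mem_cons_of_mem hy)
      rw [Multiset.prod_cons, Multiset.card_cons, pow_succ, mul_comm]
      exact mul_le_mul hx (ih ht) (by positivity) (le_trans ha hx)

/-- If `lam0` is a simple root of a monic complex polynomial `P`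
of degree `n`, then there are `δ > 0` and `K > 0` such that every monic complex
polynomial `Q` of degree `n` whose coefficient vector is within ℓ2-distance `δ`
of that of `P` has a root `r` with `|r − lam0| ≤ K ‖Q − P‖₂`.  Here
`‖Q − P‖₂ = (∑_{i<n} |(Q-P).coeff i|²)^(1/2)` is the ℓ2 distance of the
coefficient vectors (the leading coefficients agree). -/
theorem stmt5 (n : ℕ) (P : Polynomial ℂ) (hP : P.Monic) (hPdeg : P.natDegree = n)
    (lam0 : ℂ) (hroot : P.rootMultiplicity lam0 = 1) :
    ∃ δ > (0 : ℝ), ∃ K > (0 : ℝ), ∀ Q : Polynomial ℂ, Q.Monic → Q.natDegree = n →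
      Real.sqrt (∑ i ∈ Finset.range n, ‖(Q - P).coeff i‖ ^ 2) ≤ δ →
      ∃ r : ℂ, Q.eval r = 0 ∧
        ‖r - lam0‖
          ≤ K * Real.sqrt (∑ i ∈ Finset.range n, ‖(Q - P).coeff i‖ ^ 2) := by
  -- factor P = (X - lam0) * S with S(lam0) ≠ 0
  have hPne : P ≠ 0 := hP.ne_zero
  have hdvd : (X - C lam0) ∣ P := by
    have := P.pow_rootMultiplicity_dvd lam0
    rwa [hroot, pow_one] at this
  obtain ⟨S, hPS⟩ := hdvd
  have hS0 : S.eval lam0 ≠ 0 := by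
    intro h
    obtain ⟨T, hT⟩ := dvd_iff_isRoot.2 h
    have : (X - C lam0) ^ 2 ∣ P := ⟨T, by rw [hPS, hT]; ring⟩
    have h2 : 2 ≤ P.rootMultiplicity lam0 := (le_rootMultiplicity_iff hPne).2 this
    omega
  have hProot : P.eval lam0 = 0 := by simp [hPS]
  have hn : 0 < n := by
    rcases Nat.eq_zero_or_pos n with h0 | h
    · exfalso
      have : P = 1 := hP.natDegree_eq_zero.1 (by rw [hPdeg, h0])
      rw [this] at hProot; simp at hProot
    · exact h
  set c : ℝ := ‖S.eval lam0‖ with hc_def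
  have hc : 0 < c := norm_pos_iff.mpr hS0
  -- continuity of S at lam0
  have hcont : ContinuousAt (fun z : ℂ => S.eval z) lam0 := S.continuous.continuousAt
  rw [Metric.continuousAt_iff] at hcont
  obtain ⟨ρ0, hρ0, hball⟩ := hcont (c / 2) (by positivity)
  set ρ : ℝ := min (ρ0 / 2) 1 with hρ_def
  have hρpos : 0 < ρ := lt_min (by positivity) one_pos
  have hρ1 : ρ ≤ 1 := min_le_right _ _
  have hSbig : ∀ z : ℂ, ‖z - lam0‖ ≤ ρ → c / 2 ≤ ‖S.eval z‖ := by
    intro z hz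
    have hzd : dist z lam0 < ρ0 := by
      rw [Complex.dist_eq]
      calc ‖z - lam0‖ ≤ ρ := hz
        _ ≤ ρ0 / 2 := min_le_left _ _
        _ < ρ0 := by linarith
    have h1 := hball hzd
    rw [Complex.dist_eq] at h1
    have h2 : |‖S.eval z‖ - ‖S.eval lam0‖|
        ≤ ‖S.eval z - S.eval lam0‖ :=
      abs_norm_sub_norm_le _ _
    rw [abs_le] at h2
    rw [hc_def]
    linarith [h2.1]
  set B0 : ℝ := ∑ i ∈ Finset.range n, ‖lam0‖ ^ i with hB0_def
  set B1 : ℝ := ∑ i ∈ Finset.range n, (‖lam0‖ + 1) ^ i with hB1_def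
  have hB0nn : 0 ≤ B0 := Finset.sum_nonneg fun i _ => by positivity
  have hB1nn : 0 ≤ B1 := Finset.sum_nonneg fun i _ => by positivity
  refine ⟨min 1 (ρ ^ n / (B0 + 1)),
    lt_min one_pos (div_pos (pow_pos hρpos n) (by nlinarith)),
    2 * (B1 + 1) / c, div_pos (by nlinarith) hc, ?_⟩
  intro Q hQ hQdeg hQd
  set d : ℝ := Real.sqrt (∑ i ∈ Finset.range n, ‖(Q - P).coeff i‖ ^ 2) with hd_def
  have hdnn : 0 ≤ d := Real.sqrt_nonneg _
  have hQne : Q ≠ 0 := hQ.ne_zero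
  -- degree of Q - P is < n
  have hdeglt : (Q - P).natDegree < n := by
    rcases eq_or_ne (Q - P) 0 with h | h
    · rw [h]; simpa using hn
    · rw [natDegree_lt_iff_degree_lt h]
      have hdg : Q.degree = P.degree := by
        rw [degree_eq_natDegree hQne, degree_eq_natDegree hPne, hQdeg, hPdeg]
      have := degree_sub_lt hdg hQne (by rw [hQ.leadingCoeff, hP.leadingCoeff])
      rw [degree_eq_natDegree hQne, hQdeg] at this
      exact this
  -- coefficient bound
  have hcoeff : ∀ i, ‖(Q - P).coeff i‖ ≤ d := by
    intro i
    by_cases hi : i ∈ Finset.range n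
    · have h1 : ‖(Q - P).coeff i‖ ^ 2
          ≤ ∑ j ∈ Finset.range n, ‖(Q - P).coeff j‖ ^ 2 :=
        Finset.single_le_sum (f := fun j => ‖(Q - P).coeff j‖ ^ 2)
          (fun j _ => by positivity) hi
      calc ‖(Q - P).coeff i‖
          = Real.sqrt (‖(Q - P).coeff i‖ ^ 2) := by
            rw [Real.sqrt_sq (by positivity)]
        _ ≤ d := Real.sqrt_le_sqrt h1
    · rw [Finset.mem_range, not_lt] at hi
      rw [coeff_eq_zero_of_natDegree_lt (lt_of_lt_of_le hdeglt hi)]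
      simpa using hdnn
  -- evaluation bound
  have hevalb : ∀ z : ℂ, ‖(Q - P).eval z‖
      ≤ d * ∑ i ∈ Finset.range n, ‖z‖ ^ i := by
    intro z
    rw [eval_eq_sum_range' hdeglt]
    calc ‖∑ i ∈ Finset.range n, (Q - P).coeff i * z ^ i‖
        ≤ ∑ i ∈ Finset.range n, ‖(Q - P).coeff i * z ^ i‖ :=
          norm_sum_le _ _
      _ ≤ ∑ i ∈ Finset.range n, d * ‖z‖ ^ i := by
          apply Finset.sum_le_sum
          intro i _
          rw [norm_mul, norm_pow]
          exact mul_le_mul_of_nonneg_right (hcoeff i) (by positivity)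
      _ = d * ∑ i ∈ Finset.range n, ‖z‖ ^ i := by rw [Finset.mul_sum]
  -- |Q(lam0)| ≤ d * B0
  have hQlam0 : ‖Q.eval lam0‖ ≤ d * B0 := by
    have h : Q.eval lam0 = (Q - P).eval lam0 := by rw [eval_sub, hProot, sub_zero]
    rw [h]
    exact hevalb lam0
  -- roots of Q
  have hsplits : Q.Splits := IsAlgClosed.splits Q
  have hcard : Q.roots.card = n := by
    rw [splits_iff_card_roots.1 hsplits, hQdeg]
  have hQprod : Q = (Q.roots.map fun a => X - C a).prod :=
    hsplits.eq_prod_roots_of_monic hQ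
  -- |Q(lam0)| as a product
  have habs_prod : ‖Q.eval lam0‖
      = ((Q.roots.map fun a => ‖lam0 - a‖).prod) := by
    conv_lhs => rw [hQprod]
    rw [eval_multiset_prod, Multiset.map_map, show ∀ x : ℂ, ‖x‖ = (normHom : ℂ →*₀ ℝ) x from fun _ => rfl,
      map_multiset_prod (normHom : ℂ →*₀ ℝ), Multiset.map_map]
    congr 1
    apply Multiset.map_congr rfl
    intro a _
    simp
  -- closest root
  have hne : Q.roots.toFinset.Nonempty := by
    rw [Finset.nonempty_iff_ne_empty]
    intro h
    have h0 : Q.roots = 0 := by rwa [← Multiset.toFinset_eq_empty]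
    rw [h0] at hcard
    simp at hcard
    omega
  obtain ⟨r, hrmem, hrmin⟩ :=
    Q.roots.toFinset.exists_min_image (fun z => ‖lam0 - z‖) hne
  have hrroot : Q.eval r = 0 := (mem_roots hQne).1 (Multiset.mem_toFinset.1 hrmem)
  -- the closest root is within ρ of lam0
  have hpow : ‖lam0 - r‖ ^ n ≤ ‖Q.eval lam0‖ := by
    rw [habs_prod]
    have hall : ∀ x ∈ Q.roots.map fun a => ‖lam0 - a‖,
        ‖lam0 - r‖ ≤ x := by
      intro x hx
      obtain ⟨a, ha, rfl⟩ := Multiset.mem_map.1 hx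
      exact hrmin a (Multiset.mem_toFinset.2 ha)
    have := aux_pow_card_le_prod _ _ (norm_nonneg _) hall
    rwa [Multiset.card_map, hcard] at this
  have hdB0 : d * B0 ≤ ρ ^ n := by
    have hd1 : d ≤ ρ ^ n / (B0 + 1) := le_trans hQd (min_le_right _ _)
    calc d * B0 ≤ (ρ ^ n / (B0 + 1)) * B0 := mul_le_mul_of_nonneg_right hd1 hB0nn
      _ ≤ ρ ^ n := by
          rw [div_mul_eq_mul_div, div_le_iff₀ (by positivity)]
          nlinarith [pow_nonneg hρpos.le n]
  have hrρ : ‖r - lam0‖ ≤ ρ := by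
    rw [norm_sub_rev]
    have h1 : ‖lam0 - r‖ ^ n ≤ ρ ^ n :=
      le_trans hpow (le_trans hQlam0 hdB0)
    exact (pow_le_pow_iff_left₀ (norm_nonneg _) hρpos.le hn.ne').1 h1
  -- bound at r
  have hSr : c / 2 ≤ ‖S.eval r‖ := hSbig r hrρ
  have hPr : ‖P.eval r‖ = ‖r - lam0‖ * ‖S.eval r‖ := by
    rw [hPS]
    simp [map_mul]
  have hPQr : ‖P.eval r‖ ≤ d * B1 := by
    have h : P.eval r = -((Q - P).eval r) := by rw [eval_sub, hrroot]; ring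
    rw [h, norm_neg]
    refine le_trans (hevalb r) ?_
    refine mul_le_mul_of_nonneg_left ?_ hdnn
    refine Finset.sum_le_sum fun i _ => ?_
    refine pow_le_pow_left₀ (norm_nonneg _) ?_ i
    calc ‖r‖ = ‖lam0 + (r - lam0)‖ := by ring_nf
      _ ≤ ‖lam0‖ + ‖r - lam0‖ := norm_add_le _ _
      _ ≤ ‖lam0‖ + 1 := by linarith
  refine ⟨r, hrroot, ?_⟩
  have hmain : ‖r - lam0‖ * (c / 2) ≤ d * B1 := by
    calc ‖r - lam0‖ * (c / 2)
        ≤ ‖r - lam0‖ * ‖S.eval r‖ :=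
          mul_le_mul_of_nonneg_left hSr (norm_nonneg _)
      _ = ‖P.eval r‖ := hPr.symm
      _ ≤ d * B1 := hPQr
  have hfin : ‖r - lam0‖ ≤ d * B1 / (c / 2) :=
    (le_div_iff₀ (by positivity)).2 hmain
  refine hfin.trans ?_
  rw [div_le_iff₀ (by positivity : (0:ℝ) < c / 2)]
  have hexp : 2 * (B1 + 1) / c * d * (c / 2) = d * (B1 + 1) := by
    field_simp
  rw [hexp]
  nlinarith [hdnn]
end

section
/- Let A ∈ ℝ^{n×n} have complex eigenvalues λ_1, …, λ_n counted with algebraic multiplicity, and define Φ = (φ_1, …, φ_n) by χ_A(z) = z^n − φ_1 z^{n−1} − ⋯ − φ_n. Let Φ̂ = (φ̂_1, …, φ̂_n) ∈ ℝ^n be any estimate with ‖Φ̂ − Φ‖₂ = ε, and let r_1, …, r_n be the roots (with multiplicity) of the polynomial z^n − φ̂_1 z^{n−1} − ⋯ − φ̂_n. Then, with C = max({1} ∪ {|φ_k|^{1/k} : 1 ≤ k ≤ n} ∪ {|φ̂_k|^{1/k} : 1 ≤ k ≤ n}), the roots can be ordered so that |r_i − λ_i| ≤ 4 n C ε^{1/n}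 for all i; in particular the estimated roots converge to the true eigenvalues at rate O(ε^{1/n}) as ε → 0. -/
open Finset Polynomial Matrix Filter


section Stmt6Aux
namespace Stmt6Aux
noncomputable def QP (n : ℕ) (c : Fin n → ℂ) : Polynomial ℂ :=
  Polynomial.X ^ n - ∑ i : Fin n, Polynomial.C (c i) * Polynomial.X ^ (n - 1 - (i : ℕ))

lemma QP_coeff (n : ℕ) (c : Fin n → ℂ) (j : ℕ) :
    (QP n c).coeff j = (if j = n then 1 else 0)
      - ∑ i : Fin n, (if j = n - 1 - (i : ℕ) then c i else 0) := by
  simp [QP, coeff_X_pow, finset_sum_coeff, coeff_C_mul_X_pow]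

lemma QP_sum_degree_lt (n : ℕ) (hn : 0 < n) (c : Fin n → ℂ) :
    (∑ i : Fin n, Polynomial.C (c i) * Polynomial.X ^ (n - 1 - (i : ℕ))).degree
      < (n : WithBot ℕ) := by
  refine lt_of_le_of_lt (Polynomial.degree_sum_le _ _) ?_
  rw [Finset.sup_lt_iff (by exact_mod_cast WithBot.bot_lt_coe n)]
  intro i _
  refine lt_of_le_of_lt (Polynomial.degree_C_mul_X_pow_le _ _) ?_
  have : n - 1 - (i : ℕ) < n := Nat.lt_of_le_of_lt (Nat.sub_le _ _) (Nat.sub_lt hn one_pos)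
  exact_mod_cast this

lemma QP_monic (n : ℕ) (hn : 0 < n) (c : Fin n → ℂ) : (QP n c).Monic :=
  Polynomial.monic_X_pow_sub (QP_sum_degree_lt n hn c)

lemma QP_degree (n : ℕ) (hn : 0 < n) (c : Fin n → ℂ) : (QP n c).degree = n := by
  rw [QP]
  rw [Polynomial.degree_sub_eq_left_of_degree_lt (by
    simpa using QP_sum_degree_lt n hn c)]
  exact Polynomial.degree_X_pow n

lemma QP_natDegree (n : ℕ) (hn : 0 < n) (c : Fin n → ℂ) : (QP n c).natDegree = n :=
  Polynomial.natDegree_eq_of_degree_eq_some (QP_degree n hn c)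

lemma QP_roots_card (n : ℕ) (hn : 0 < n) (c : Fin n → ℂ) :
    Multiset.card (QP n c).roots = n := by
  have h := IsAlgClosed.card_roots_eq_natDegree (p := QP n c)
  rw [h, QP_natDegree n hn c]

lemma QP_eval (n : ℕ) (c : Fin n → ℂ) (z : ℂ) :
    (QP n c).eval z = z ^ n - ∑ i : Fin n, c i * z ^ (n - 1 - (i : ℕ)) := by
  simp [QP, eval_finset_sum]

lemma geom_half (n : ℕ) : ∑ i ∈ Finset.range n, ((1:ℝ)/2)^(i+1) = 1 - (1/2)^n := by
  induction n with
  | zero => simp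
  | succ m ih => rw [Finset.sum_range_succ, ih]; ring

lemma geom_two_le {r : ℝ} (hr : 2 ≤ r) (n : ℕ) : ∑ j ∈ Finset.range n, r ^ j ≤ r ^ n := by
  induction n with
  | zero => simp
  | succ m ih =>
    rw [Finset.sum_range_succ, pow_succ]
    nlinarith [pow_nonneg (by linarith : (0:ℝ) ≤ r) m]

lemma root_bound (n : ℕ) (Cv : ℝ) (hC1 : 1 ≤ Cv) (c : Fin n → ℂ)
    (hc : ∀ i : Fin n, ‖c i‖ ≤ Cv ^ ((i : ℕ) + 1)) (z : ℂ)
    (hz : z ^ n = ∑ i : Fin n, c i * z ^ (n - 1 - (i : ℕ))) (hn : 0 < n) :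
    ‖z‖ ≤ 2 * Cv := by
  by_contra h
  push_neg at h
  have hz0 : (0:ℝ) < ‖z‖ := by linarith
  have hbd : ∀ i : Fin n, ‖c i * z ^ (n - 1 - (i : ℕ))‖
      ≤ ‖z‖ ^ n * ((1:ℝ)/2) ^ ((i : ℕ) + 1) := by
    intro i
    rw [norm_mul, norm_pow]
    have hsplit : ((i : ℕ) + 1) + (n - 1 - (i : ℕ)) = n := by omega
    have h1 : ‖c i‖ ≤ (‖z‖ / 2) ^ ((i : ℕ) + 1) :=
      (hc i).trans (pow_le_pow_left₀ (by linarith) (by linarith) _)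
    calc ‖c i‖ * ‖z‖ ^ (n - 1 - (i : ℕ))
        ≤ (‖z‖ / 2) ^ ((i : ℕ) + 1) * ‖z‖ ^ (n - 1 - (i : ℕ)) :=
          mul_le_mul_of_nonneg_right h1 (by positivity)
      _ = (‖z‖ ^ ((i : ℕ) + 1) * ‖z‖ ^ (n - 1 - (i : ℕ)))
            * ((1:ℝ)/2) ^ ((i : ℕ) + 1) := by rw [div_pow, _root_.one_div_pow, mul_one_div, div_mul_eq_mul_div]
      _ = ‖z‖ ^ n * ((1:ℝ)/2) ^ ((i : ℕ) + 1) := by rw [← pow_add, hsplit]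
  have hsum : ‖z‖ ^ n ≤ ∑ i : Fin n, ‖c i * z ^ (n - 1 - (i : ℕ))‖ := by
    calc ‖z‖ ^ n = ‖z ^ n‖ := by rw [norm_pow]
      _ = ‖∑ i : Fin n, c i * z ^ (n - 1 - (i : ℕ))‖ := by rw [hz]
      _ ≤ ∑ i : Fin n, ‖c i * z ^ (n - 1 - (i : ℕ))‖ := norm_sum_le _ _
  have h2 : ∑ i : Fin n, ‖z‖ ^ n * ((1:ℝ)/2) ^ ((i : ℕ) + 1)
      = ‖z‖ ^ n * (1 - (1/2)^n) := by
    rw [← Finset.mul_sum]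
    congr 1
    rw [Fin.sum_univ_eq_sum_range (fun i => ((1:ℝ)/2)^(i+1)), geom_half]
  have h3 : ∑ i : Fin n, ‖c i * z ^ (n - 1 - (i : ℕ))‖
      ≤ ‖z‖ ^ n * (1 - (1/2)^n) := by
    rw [← h2]; exact Finset.sum_le_sum fun i _ => hbd i
  have hp : (0:ℝ) < ‖z‖ ^ n := by positivity
  have hq : (0:ℝ) < (1/2:ℝ)^n := by positivity
  nlinarith

lemma eval_pert (n : ℕ) (Cv e : ℝ) (hC1 : 1 ≤ Cv) (he : 0 ≤ e) (c c' : Fin n → ℂ)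
    (hcd : ∀ i : Fin n, ‖c i - c' i‖ ≤ e) (z : ℂ)
    (hz : (QP n c').eval z = 0) (hzb : ‖z‖ ≤ 2 * Cv) :
    ‖(QP n c).eval z‖ ≤ e * (2 * Cv) ^ n := by
  have habs0 : (0:ℝ) ≤ ‖z‖ := norm_nonneg z
  have key : (QP n c).eval z = ∑ i : Fin n, (c' i - c i) * z ^ (n - 1 - (i : ℕ)) := by
    have h1 := QP_eval n c z
    have h2 := QP_eval n c' z
    rw [hz] at *
    rw [h1]
    rw [eq_comm, sub_eq_zero] at h2
    rw [h2, ← Finset.sum_sub_distrib]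
    congr 1; funext i; ring
  rw [key]
  calc ‖∑ i : Fin n, (c' i - c i) * z ^ (n - 1 - (i : ℕ))‖
      ≤ ∑ i : Fin n, ‖(c' i - c i) * z ^ (n - 1 - (i : ℕ))‖ :=
        norm_sum_le _ _
    _ ≤ ∑ i : Fin n, e * (2*Cv) ^ (n - 1 - (i : ℕ)) := by
        refine Finset.sum_le_sum fun i _ => ?_
        rw [norm_mul, norm_pow]
        have h1 : ‖c' i - c i‖ ≤ e := by
          have := hcd i
          rwa [← norm_neg, neg_sub] at this
        exact mul_le_mul h1 (pow_le_pow_left₀ habs0 hzb _) (by positivity) he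
    _ = e * ∑ i : Fin n, (2*Cv) ^ (n - 1 - (i : ℕ)) := by rw [Finset.mul_sum]
    _ ≤ e * (2*Cv) ^ n := by
        refine mul_le_mul_of_nonneg_left ?_ he
        rw [Fin.sum_univ_eq_sum_range (fun i => (2*Cv) ^ (n - 1 - i))]
        have := Finset.sum_range_reflect (fun j => (2*Cv)^j) n
        rw [this]
        exact geom_two_le (by linarith) n

lemma prod_form {n : ℕ} {p : Polynomial ℂ} (hm : p.Monic) (lam : Fin n → ℂ)
    (hr : p.roots = Multiset.map lam Finset.univ.val) :
    p = ∏ i : Fin n, (Polynomial.X - Polynomial.C (lam i)) := by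
  have h := (IsAlgClosed.splits p).eq_prod_roots_of_monic hm
  rw [hr, Multiset.map_map] at h
  rw [h]
  rw [Finset.prod_eq_multiset_prod]
  rfl

lemma exists_close_root {n : ℕ} (hn : 0 < n) (lam : Fin n → ℂ) (z : ℂ) (δ : ℝ)
    (hδ : 0 ≤ δ) (hprod : ∏ i : Fin n, ‖z - lam i‖ ≤ δ ^ n) :
    ∃ i : Fin n, ‖z - lam i‖ ≤ δ := by
  by_contra h
  push_neg at h
  rcases eq_or_lt_of_le hδ with h0 | h0
  · have : (0:ℝ) < ∏ i : Fin n, ‖z - lam i‖ :=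
      Finset.prod_pos fun i _ => lt_of_le_of_lt hδ (h i)
    rw [← h0, zero_pow hn.ne'] at hprod
    linarith
  · have hne : (Finset.univ : Finset (Fin n)).Nonempty := ⟨⟨0, hn⟩, Finset.mem_univ _⟩
    have : ∏ _i : Fin n, δ < ∏ i : Fin n, ‖z - lam i‖ :=
      Finset.prod_lt_prod_of_nonempty (fun i _ => h0) (fun i _ => h i) hne
    rw [Finset.prod_const, Finset.card_univ, Fintype.card_fin] at this
    linarith

lemma cont_coeff_prod {ι : Type*} [DecidableEq ι] (s : Finset ι) :
    ∀ j : ℕ, Continuous fun g : ι → ℂ =>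
      (∏ i ∈ s, (Polynomial.X - Polynomial.C (g i))).coeff j := by
  induction s using Finset.induction_on with
  | empty => intro j; simp only [Finset.prod_empty, Polynomial.coeff_one]; exact continuous_const
  | insert a s' ha ih =>
    intro j
    have hexp : ∀ g : ι → ℂ, (∏ i ∈ insert a s', (Polynomial.X - Polynomial.C (g i)))
        = Polynomial.X * (∏ i ∈ s', (Polynomial.X - Polynomial.C (g i)))
          - Polynomial.C (g a) * (∏ i ∈ s', (Polynomial.X - Polynomial.C (g i))) := by
      intro g
      rw [Finset.prod_insert ha, sub_mul]
    cases j with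
    | zero =>
      have : (fun g : ι → ℂ => (∏ i ∈ insert a s', (Polynomial.X - Polynomial.C (g i))).coeff 0)
          = fun g : ι → ℂ => 0 - g a * (∏ i ∈ s', (Polynomial.X - Polynomial.C (g i))).coeff 0 := by
        funext g
        rw [hexp g, Polynomial.coeff_sub, Polynomial.mul_coeff_zero, Polynomial.coeff_X_zero,
          Polynomial.coeff_C_mul, zero_mul]
      rw [this]
      exact (continuous_const.sub ((continuous_apply a).mul (ih 0)))
    | succ k =>
      have : (fun g : ι → ℂ =>
            (∏ i ∈ insert a s', (Polynomial.X - Polynomial.C (g i))).coeff (k+1))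
          = fun g : ι → ℂ => (∏ i ∈ s', (Polynomial.X - Polynomial.C (g i))).coeff k
              - g a * (∏ i ∈ s', (Polynomial.X - Polynomial.C (g i))).coeff (k+1) := by
        funext g
        rw [hexp g, Polynomial.coeff_sub, Polynomial.coeff_X_mul, Polynomial.coeff_C_mul]
      rw [this]
      exact (ih k).sub ((continuous_apply a).mul (ih (k+1)))

lemma exists_enum {n : ℕ} (s : Multiset ℂ) (h : Multiset.card s = n) :
    ∃ f : Fin n → ℂ, Multiset.map f Finset.univ.val = s := by
  have hl : s.toList.length = n := by rw [Multiset.length_toList, h]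
  refine ⟨fun i => s.toList.get (Fin.cast hl.symm i), ?_⟩
  rw [Fin.univ_val_map]
  have : List.ofFn (fun i : Fin n => s.toList.get (Fin.cast hl.symm i)) = s.toList := by
    apply List.ext_get (by simp [hl])
    intro i h1 h2
    simp
  rw [this, Multiset.coe_toList]

lemma root_bound' (n : ℕ) (hn : 0 < n) (Cv : ℝ) (hC1 : 1 ≤ Cv) (c : Fin n → ℂ)
    (hc : ∀ i : Fin n, ‖c i‖ ≤ Cv ^ ((i : ℕ) + 1)) (z : ℂ)
    (hz : z ∈ (QP n c).roots) : ‖z‖ ≤ 2 * Cv := by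
  have h0 := (Polynomial.mem_roots'.1 hz).2
  rw [Polynomial.IsRoot, QP_eval, sub_eq_zero] at h0
  exact root_bound n Cv hC1 c hc z h0 hn

lemma exists_subseq_roots (n : ℕ) (hn : 0 < n) (Cv : ℝ) (hC1 : 1 ≤ Cv)
    (c : ℕ → Fin n → ℂ) (cl : Fin n → ℂ)
    (hb : ∀ k (i : Fin n), ‖c k i‖ ≤ Cv ^ ((i : ℕ) + 1))
    (hconv : ∀ i : Fin n, Tendsto (fun k => c k i) atTop (nhds (cl i)))
    (rts : ℕ → Fin n → ℂ)
    (hrts : ∀ k, Multiset.map (rts k) Finset.univ.val = (QP n (c k)).roots) :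
    ∃ φ : ℕ → ℕ, StrictMono φ ∧ ∃ ρ : Fin n → ℂ,
      Multiset.map ρ Finset.univ.val = (QP n cl).roots ∧
      ∀ i, Tendsto (fun k => rts (φ k) i) atTop (nhds (ρ i)) := by
  classical
  -- roots bounded
  have hmem : ∀ k (i : Fin n), rts k i ∈ (QP n (c k)).roots := by
    intro k i
    rw [← hrts k]
    exact Multiset.mem_map_of_mem _ (Finset.mem_univ_val i)
  have hbd : ∀ k (i : Fin n), ‖rts k i‖ ≤ 2 * Cv := fun k i =>
    root_bound' n hn Cv hC1 (c k) (hb k) _ (hmem k i)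
  -- compactness
  have hcpt : IsCompact (Set.univ.pi fun _ : Fin n => Metric.closedBall (0:ℂ) (2*Cv)) :=
    isCompact_univ_pi fun _ => isCompact_closedBall _ _
  have hin : ∀ k, rts k ∈ (Set.univ.pi fun _ : Fin n => Metric.closedBall (0:ℂ) (2*Cv)) := by
    intro k
    rw [Set.mem_univ_pi]
    intro i
    rw [Metric.mem_closedBall, Complex.dist_eq, sub_zero]
    exact hbd k i
  obtain ⟨ρ, _, φ, hφ, htend⟩ := hcpt.tendsto_subseq hin
  have htendi : ∀ i, Tendsto (fun k => rts (φ k) i) atTop (nhds (ρ i)) := by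
    intro i
    exact (continuous_apply i).continuousAt.tendsto.comp htend
  refine ⟨φ, hφ, ρ, ?_, htendi⟩
  -- factorization along the sequence
  have hfact : ∀ k, QP n (c k) = ∏ i : Fin n, (Polynomial.X - Polynomial.C (rts k i)) :=
    fun k => prod_form (QP_monic n hn _) (rts k) (hrts k).symm
  -- show QP n cl = ∏ (X - C (ρ i))
  have hQ : QP n cl = ∏ i : Fin n, (Polynomial.X - Polynomial.C (ρ i)) := by
    apply Polynomial.ext
    intro j
    have hL : Tendsto (fun k => (QP n (c (φ k))).coeff j) atTop (nhds ((QP n cl).coeff j)) := by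
      simp only [QP_coeff]
      refine Tendsto.sub tendsto_const_nhds ?_
      refine tendsto_finset_sum _ fun i _ => ?_
      by_cases hij : j = n - 1 - (i : ℕ)
      · simp only [if_pos hij]
        exact (hconv i).comp (hφ.tendsto_atTop)
      · simp only [if_neg hij]; exact tendsto_const_nhds
    have hR : Tendsto (fun k => (∏ i : Fin n, (Polynomial.X - Polynomial.C (rts (φ k) i))).coeff j)
        atTop (nhds ((∏ i : Fin n, (Polynomial.X - Polynomial.C (ρ i))).coeff j)) := by
      exact ((cont_coeff_prod Finset.univ j).continuousAt.tendsto).comp htend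
    have heq : (fun k => (QP n (c (φ k))).coeff j)
        = fun k => (∏ i : Fin n, (Polynomial.X - Polynomial.C (rts (φ k) i))).coeff j := by
      funext k; rw [hfact (φ k)]
    rw [heq] at hL
    exact tendsto_nhds_unique hL hR
  rw [hQ]
  -- roots of the product
  have : (∏ i : Fin n, (Polynomial.X - Polynomial.C (ρ i)))
      = (Multiset.map (fun z => Polynomial.X - Polynomial.C z)
          (Multiset.map ρ Finset.univ.val)).prod := by
    rw [Multiset.map_map, Finset.prod_eq_multiset_prod]
    rfl
  rw [this, Polynomial.roots_multiset_prod_X_sub_C]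

lemma rel_of_classes {α β ι : Type*} (D : α → β → Prop) (V : ι → α → Prop) (W : ι → β → Prop)
    [DecidableEq β] [∀ c, DecidablePred (V c)] [∀ c, DecidablePred (W c)] :
    ∀ (s : Multiset α) (t : Multiset β),
    (∀ a ∈ s, ∃ c, V c a) → (∀ a ∈ s, ∀ c c', V c a → V c' a → c = c') →
    (∀ b ∈ t, ∃ c, W c b) → (∀ b ∈ t, ∀ c c', W c b → W c' b → c = c') →
    (∀ c, Multiset.countP (V c) s = Multiset.countP (W c) t) →
    (∀ c a b, a ∈ s → b ∈ t → V c a → W c b → D a b) →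
    Multiset.Rel D s t := by
  intro s
  induction s using Multiset.induction_on with
  | empty =>
    intro t _ _ hWex _ hcnt _
    rcases Multiset.empty_or_exists_mem t with ht | ⟨b, hb⟩
    · rw [ht]; exact Multiset.Rel.zero
    · obtain ⟨c, hc⟩ := hWex b hb
      have h1 : 0 < Multiset.countP (W c) t := Multiset.countP_pos.2 ⟨b, hb, hc⟩
      rw [← hcnt c] at h1
      simp at h1
  | cons a s ih =>
    intro t hVex hVuniq hWex hWuniq hcnt hD
    obtain ⟨c, hc⟩ := hVex a (Multiset.mem_cons_self a s)
    have h1 : 0 < Multiset.countP (W c) t := by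
      rw [← hcnt c]
      rw [Multiset.countP_cons_of_pos _ hc]
      omega
    obtain ⟨b, hbt, hWb⟩ := Multiset.countP_pos.1 h1
    have ht : t = b ::ₘ t.erase b := (Multiset.cons_erase hbt).symm
    rw [ht]
    refine Multiset.Rel.cons (hD c a b (Multiset.mem_cons_self a s) hbt hc hWb) ?_
    refine ih (t.erase b)
      (fun x hx => hVex x (Multiset.mem_cons_of_mem hx))
      (fun x hx => hVuniq x (Multiset.mem_cons_of_mem hx))
      (fun y hy => hWex y (Multiset.mem_of_mem_erase hy))
      (fun y hy => hWuniq y (Multiset.mem_of_mem_erase hy))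
      ?_
      (fun c' x y hx hy => hD c' x y (Multiset.mem_cons_of_mem hx) (Multiset.mem_of_mem_erase hy))
    intro c'
    have hcnt' := hcnt c'
    rw [ht, Multiset.countP_cons, Multiset.countP_cons] at hcnt'
    by_cases hcc : c' = c
    · subst hcc
      rw [if_pos hc, if_pos hWb] at hcnt'
      omega
    · have hVa : ¬ V c' a := fun h => hcc (hVuniq a (Multiset.mem_cons_self a s) c' c h hc)
      have hWb' : ¬ W c' b := fun h => hcc (hWuniq b hbt c' c h hWb)
      rw [if_neg hVa, if_neg hWb'] at hcnt'
      omega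

lemma exists_fun_of_rel {ι β : Type*} [DecidableEq ι] [Inhabited β] (S : ι → β → Prop) :
    ∀ (l : List ι), l.Nodup → ∀ t : Multiset β,
    Multiset.Rel (fun i b => S i b) (↑l) t →
    ∃ r : ι → β, t = Multiset.map r (↑l) ∧ ∀ i ∈ l, S i (r i) := by
  intro l
  induction l with
  | nil =>
    intro _ t hrel
    rw [Multiset.coe_nil, Multiset.rel_zero_left] at hrel
    exact ⟨fun _ => default, by simp [hrel], by simp⟩
  | cons i l ih =>
    intro hnd t hrel
    rw [← Multiset.cons_coe, Multiset.rel_cons_left] at hrel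
    obtain ⟨b, t', hSb, hrel', ht⟩ := hrel
    obtain ⟨r', ht', hS'⟩ := ih (List.Nodup.of_cons hnd) t' hrel'
    refine ⟨Function.update r' i b, ?_, ?_⟩
    · rw [ht, ht', ← Multiset.cons_coe, Multiset.map_cons]
      have hmap : Multiset.map (Function.update r' i b) (↑l) = Multiset.map r' (↑l) := by
        apply Multiset.map_congr rfl
        intro j hj
        have hji : j ≠ i := by
          rintro rfl
          exact (List.nodup_cons.1 hnd).1 (by exact_mod_cast hj)
        rw [Function.update_of_ne hji]
      rw [hmap, Function.update_self]
    · intro j hj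
      rcases List.mem_cons.1 hj with rfl | hj'
      · rw [Function.update_self]; exact hSb
      · have hji : j ≠ i := by rintro rfl; exact (List.nodup_cons.1 hnd).1 hj'
        rw [Function.update_of_ne hji]
        exact hS' j hj'

variable {n : ℕ} (lam : Fin n → ℂ) (δ : ℝ)

noncomputable def GG (lam : Fin n → ℂ) (δ : ℝ) : SimpleGraph (Fin n) :=
  SimpleGraph.fromRel (fun i j => ‖lam i - lam j‖ ≤ 2 * δ)

lemma GG_adj_le {i j : Fin n} (h : (GG lam δ).Adj i j) :
    ‖lam i - lam j‖ ≤ 2 * δ := by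
  rcases h with ⟨hne, h | h⟩
  · exact h
  · rwa [← norm_neg, neg_sub] at h

lemma GG_reach_of_close {i j : Fin n} (h : ‖lam i - lam j‖ ≤ 2 * δ) :
    (GG lam δ).Reachable i j := by
  by_cases hij : i = j
  · subst hij; exact SimpleGraph.Reachable.refl i
  · exact SimpleGraph.Adj.reachable ⟨hij, Or.inl h⟩

lemma GG_walk_bound {i j : Fin n} (w : (GG lam δ).Walk i j) (hδ : 0 ≤ δ) :
    ‖lam i - lam j‖ ≤ 2 * δ * w.length := by
  induction w with
  | nil => simp
  | cons h w ih =>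
    rename_i u v x
    calc ‖lam u - lam x‖
        ≤ ‖lam u - lam v‖ + ‖lam v - lam x‖ :=
          norm_sub_le_norm_sub_add_norm_sub (lam u) (lam v) (lam x)
      _ ≤ 2 * δ + 2 * δ * w.length := add_le_add (GG_adj_le lam δ h) ih
      _ = 2 * δ * ((w.length : ℝ) + 1) := by ring
      _ = 2 * δ * (SimpleGraph.Walk.cons h w).length := by
          rw [SimpleGraph.Walk.length_cons]
          push_cast
          ring

lemma GG_reach_bound (hn : 0 < n) {i j : Fin n} (h : (GG lam δ).Reachable i j) (hδ : 0 ≤ δ) :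
    ‖lam i - lam j‖ ≤ 2 * δ * (n - 1) := by
  obtain ⟨w⟩ := h
  have hp := w.toPath.2
  have hlen : (w.toPath : (GG lam δ).Walk i j).length < n := by
    have := hp.length_lt
    simpa using this
  calc ‖lam i - lam j‖
      ≤ 2 * δ * (w.toPath : (GG lam δ).Walk i j).length := GG_walk_bound lam δ _ hδ
    _ ≤ 2 * δ * (n - 1) := by
        have h1 : ((w.toPath : (GG lam δ).Walk i j).length : ℝ) ≤ (n : ℝ) - 1 := by
          have h2 : ((w.toPath : (GG lam δ).Walk i j).length : ℝ) + 1 ≤ (n : ℝ) := by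
            exact_mod_cast Nat.succ_le_of_lt hlen
          linarith
        have h0 : 0 ≤ 2 * δ := by linarith
        exact mul_le_mul_of_nonneg_left h1 h0

lemma QP_sum_single (n : ℕ) (c : Fin n → ℂ) (j : ℕ) (hj : j < n) :
    ∑ i : Fin n, (if j = n - 1 - (i : ℕ) then c i else 0) = c ⟨n - 1 - j, by omega⟩ := by
  rw [Finset.sum_eq_single (⟨n - 1 - j, by omega⟩ : Fin n)]
  · simp only [Fin.val_mk]
    rw [if_pos (by omega)]
  · intro i _ hne
    rw [if_neg]
    intro h
    apply hne
    have hi : (i : ℕ) < n := i.isLt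
    apply Fin.ext
    simp only [Fin.val_mk]
    omega
  · intro h; exact absurd (Finset.mem_univ _) h

lemma charpoly_eq_QP (n : ℕ) (hn : 0 < n) (A : Matrix (Fin n) (Fin n) ℝ)
    (φ : Fin n → ℝ)
    (hφ : ∀ i : Fin n, φ i = -(A.charpoly.coeff (n - ((i : ℕ) + 1)))) :
    A.charpoly.map (algebraMap ℝ ℂ) = QP n (fun i => (φ i : ℂ)) := by
  have : Nonempty (Fin n) := ⟨⟨0, hn⟩⟩
  have hmonic : A.charpoly.Monic := A.charpoly_monic
  have hdeg : A.charpoly.natDegree = n := by simpa using A.charpoly_natDegree_eq_dim (M := A)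
  apply Polynomial.ext
  intro j
  rw [Polynomial.coeff_map, QP_coeff]
  rcases lt_trichotomy j n with hj | hj | hj
  · rw [if_neg (by omega), QP_sum_single n _ j hj]
    rw [hφ ⟨n - 1 - j, by omega⟩]
    simp only [Fin.val_mk]
    rw [show n - (n - 1 - j + 1) = j by omega]
    push_cast
    ring_nf
    rfl
  · rw [if_pos hj, hj]
    have h1 : A.charpoly.coeff n = 1 := by
      have h2 := hmonic.coeff_natDegree
      rwa [hdeg] at h2
    rw [h1]
    have hz : ∑ i : Fin n, (if n = n - 1 - (i : ℕ) then ((φ i : ℂ)) else 0) = 0 := by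
      apply Finset.sum_eq_zero
      intro i _
      rw [if_neg]
      have : (i : ℕ) < n := i.isLt
      omega
    rw [hz]
    simp
  · rw [if_neg (by omega)]
    have h1 : A.charpoly.coeff j = 0 :=
      Polynomial.coeff_eq_zero_of_natDegree_lt (by omega)
    rw [h1]
    have hz : ∑ i : Fin n, (if j = n - 1 - (i : ℕ) then ((φ i : ℂ)) else 0) = 0 := by
      apply Finset.sum_eq_zero
      intro i _
      rw [if_neg]
      have : (i : ℕ) < n := i.isLt
      omega
    rw [hz]
    simp
end Stmt6Aux
end Stmt6Aux

open Stmt6Aux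

set_option maxHeartbeats 1600000 in
/-- Let `A ∈ ℝ^{n×n}` have complex eigenvalues `λ₁, …, λₙ`
(the roots of `χ_A` over `ℂ`, with multiplicity) and autoregressive parameters
`Φ` defined by `χ_A(z) = z^n − φ₁ z^(n−1) − ⋯ − φₙ`.  For any estimate `Φ̂` with
`‖Φ̂ − Φ‖₂ = ε`, the roots of `z^n − φ̂₁ z^(n−1) − ⋯ − φ̂ₙ` can be ordered so
that `|rᵢ − λᵢ| ≤ 4 n C ε^(1/n)` for all `i`, where
`C = max({1} ∪ {|φ_k|^(1/k)} ∪ {|φ̂_k|^(1/k)})`. -/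
theorem stmt6 (n : ℕ) (A : Matrix (Fin n) (Fin n) ℝ)
    (lam : Fin n → ℂ)
    (hlam : (A.charpoly.map (algebraMap ℝ ℂ)).roots = Multiset.map lam Finset.univ.val)
    (φ : Fin n → ℝ)
    (hφ : ∀ i : Fin n, φ i = -(A.charpoly.coeff (n - ((i : ℕ) + 1))))
    (φh : Fin n → ℝ) (ε Cv : ℝ)
    (hε : Real.sqrt (∑ i, (φh i - φ i) ^ 2) = ε)
    (hC : IsGreatest
      (insert (1 : ℝ)
        ((Set.range fun k : Fin n => |φ k| ^ ((1 : ℝ) / ((k : ℕ) + 1)))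
          ∪ (Set.range fun k : Fin n => |φh k| ^ ((1 : ℝ) / ((k : ℕ) + 1))))) Cv) :
    ∃ r : Fin n → ℂ,
      (Polynomial.X ^ n
        - ∑ i : Fin n, Polynomial.C ((φh i : ℂ)) * Polynomial.X ^ (n - 1 - (i : ℕ))).roots
          = Multiset.map r Finset.univ.val
      ∧ ∀ i, ‖r i - lam i‖ ≤ 4 * n * Cv * ε ^ ((1 : ℝ) / n) := by
  classical
  rcases Nat.eq_zero_or_pos n with hn0 | hn
  · subst hn0
    refine ⟨fun _ => 0, ?_, fun i => i.elim0⟩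
    simp
  -- basic numeric facts
  have hε0 : 0 ≤ ε := hε ▸ Real.sqrt_nonneg _
  have hCv1 : 1 ≤ Cv := hC.2 (Set.mem_insert _ _)
  have hpow : ∀ (x : ℝ) (k : ℕ), 0 ≤ x → x ^ ((1:ℝ)/(k+1)) ≤ Cv → x ≤ Cv ^ (k+1) := by
    intro x k hx hle
    have hx2 : (x ^ ((1:ℝ)/((k:ℝ)+1))) ^ ((k+1 : ℕ)) = x := by
      rw [← Real.rpow_natCast (x ^ ((1:ℝ)/((k:ℝ)+1))) (k+1), ← Real.rpow_mul hx]
      push_cast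
      rw [one_div_mul_cancel (by positivity), Real.rpow_one]
    calc x = (x ^ ((1:ℝ)/((k:ℝ)+1))) ^ ((k+1 : ℕ)) := hx2.symm
      _ ≤ Cv ^ (k+1) := pow_le_pow_left₀ (Real.rpow_nonneg hx _) hle _
  have ha : ∀ i : Fin n, |φ i| ≤ Cv ^ ((i : ℕ) + 1) := by
    intro i
    refine hpow _ _ (abs_nonneg _) (hC.2 ?_)
    exact Set.mem_insert_of_mem _ (Set.mem_union_left _ ⟨i, rfl⟩)
  have hbb : ∀ i : Fin n, |φh i| ≤ Cv ^ ((i : ℕ) + 1) := by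
    intro i
    refine hpow _ _ (abs_nonneg _) (hC.2 ?_)
    exact Set.mem_insert_of_mem _ (Set.mem_union_right _ ⟨i, rfl⟩)
  have hdist : ∀ i : Fin n, |φh i - φ i| ≤ ε := by
    intro i
    rw [← hε, ← Real.sqrt_sq_eq_abs]
    apply Real.sqrt_le_sqrt
    exact Finset.single_le_sum (f := fun j => (φh j - φ j)^2) (fun j _ => sq_nonneg _)
      (Finset.mem_univ i)
  set δ : ℝ := 2 * Cv * ε ^ ((1:ℝ)/n) with hδdef
  have hδ0 : 0 ≤ δ := by
    have := Real.rpow_nonneg hε0 ((1:ℝ)/n)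
    positivity
  have hδn : δ ^ n = ε * (2*Cv) ^ n := by
    rw [hδdef, mul_pow]
    have : (ε ^ ((1:ℝ)/n)) ^ n = ε := by
      rw [← Real.rpow_natCast (ε ^ ((1:ℝ)/n)) n, ← Real.rpow_mul hε0,
        one_div_mul_cancel (by positivity : (n:ℝ) ≠ 0), Real.rpow_one]
    rw [this]
    ring
  -- coefficient path
  set cc : ℝ → Fin n → ℂ := fun t i => (((1-t) * φ i + t * φh i : ℝ) : ℂ) with hccdef
  have hccIcc : ∀ t ∈ Set.Icc (0:ℝ) 1, ∀ i : Fin n,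
      ‖cc t i‖ ≤ Cv ^ ((i : ℕ) + 1) := by
    rintro t ⟨ht0, ht1⟩ i
    rw [hccdef]
    simp only [Complex.norm_real, Real.norm_eq_abs]
    calc |(1-t) * φ i + t * φh i| ≤ |(1-t) * φ i| + |t * φh i| := abs_add_le _ _
      _ = (1-t) * |φ i| + t * |φh i| := by
          rw [abs_mul, abs_mul, abs_of_nonneg (by linarith), abs_of_nonneg ht0]
      _ ≤ (1-t) * Cv ^ ((i:ℕ)+1) + t * Cv ^ ((i:ℕ)+1) := by
          have := ha i; have := hbb i
          have h1 : (0:ℝ) ≤ 1 - t := by linarith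
          nlinarith
      _ = Cv ^ ((i:ℕ)+1) := by ring
  have hccd : ∀ t ∈ Set.Icc (0:ℝ) 1, ∀ i : Fin n,
      ‖cc 0 i - cc t i‖ ≤ ε := by
    rintro t ⟨ht0, ht1⟩ i
    rw [hccdef]
    simp only
    have : ((((1-(0:ℝ)) * φ i + 0 * φh i : ℝ) : ℂ)) - (((1-t) * φ i + t * φh i : ℝ) : ℂ)
        = ((t * (φ i - φh i) : ℝ) : ℂ) := by
      push_cast
      ring
    rw [this, Complex.norm_real, Real.norm_eq_abs, abs_mul, abs_of_nonneg ht0]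
    have h2 : |φ i - φh i| ≤ ε := by rw [abs_sub_comm]; exact hdist i
    nlinarith
  -- identification at t = 0
  have hcc0 : cc 0 = fun i : Fin n => ((φ i : ℝ) : ℂ) := by
    funext i
    rw [hccdef]
    push_cast
    ring
  have hroots0 : (QP n (cc 0)).roots = Multiset.map lam Finset.univ.val := by
    rw [hcc0, ← charpoly_eq_QP n hn A φ hφ]
    exact hlam
  have hprod0 : QP n (cc 0) = ∏ i : Fin n, (Polynomial.X - Polynomial.C (lam i)) :=
    prod_form (QP_monic n hn _) lam hroots0
  -- every root of every intermediate polynomial is δ-close to some lam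
  have hnear : ∀ t ∈ Set.Icc (0:ℝ) 1, ∀ z ∈ (QP n (cc t)).roots,
      ∃ j : Fin n, ‖z - lam j‖ ≤ δ := by
    intro t ht z hz
    have hzb : ‖z‖ ≤ 2 * Cv :=
      root_bound' n hn Cv hCv1 (cc t) (hccIcc t ht) z hz
    have hz0 : (QP n (cc t)).eval z = 0 := (Polynomial.mem_roots'.1 hz).2
    have hev : ‖(QP n (cc 0)).eval z‖ ≤ ε * (2*Cv) ^ n :=
      eval_pert n Cv ε hCv1 hε0 (cc 0) (cc t) (hccd t ht) z hz0 hzb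
    have heq : (QP n (cc 0)).eval z = ∏ i : Fin n, (z - lam i) := by
      rw [hprod0]
      simp [Polynomial.eval_prod]
    rw [heq, norm_prod] at hev
    refine exists_close_root hn lam z δ hδ0 ?_
    rw [hδn]
    exact hev
  -- the cluster graph
  set U : (GG lam δ).ConnectedComponent → ℂ → Prop :=
    fun q z => ∃ j : Fin n, (GG lam δ).connectedComponentMk j = q
      ∧ ‖z - lam j‖ ≤ δ with hUdef
  have habs_comm : ∀ a b : ℂ, ‖a - b‖ = ‖b - a‖ := by
    intro a b
    rw [← norm_neg, neg_sub]
  have hwelldef : ∀ (z : ℂ) q q', U q z → U q' z → q = q' := by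
    rintro z q q' ⟨j, hjq, hjz⟩ ⟨j', hjq', hjz'⟩
    rw [← hjq, ← hjq']
    apply SimpleGraph.ConnectedComponent.eq.2
    apply GG_reach_of_close
    calc ‖lam j - lam j'‖
        ≤ ‖lam j - z‖ + ‖z - lam j'‖ := norm_sub_le_norm_sub_add_norm_sub _ _ _
      _ ≤ δ + δ := add_le_add (by rw [habs_comm]; exact hjz) hjz'
      _ = 2 * δ := by ring
  have hUself : ∀ i : Fin n, U ((GG lam δ).connectedComponentMk i) (lam i) := by
    intro i
    exact ⟨i, rfl, by simp [hδ0]⟩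
  have hUD : ∀ (q) (u v : ℂ), U q u → U q v → ‖v - u‖ ≤ 2 * δ * n := by
    rintro q u v ⟨j, hjq, hju⟩ ⟨j', hjq', hjv⟩
    have hreach : (GG lam δ).Reachable j' j := by
      apply SimpleGraph.ConnectedComponent.eq.1
      rw [hjq, hjq']
    calc ‖v - u‖
        ≤ ‖v - lam j'‖ + ‖lam j' - u‖ := norm_sub_le_norm_sub_add_norm_sub _ _ _
      _ ≤ ‖v - lam j'‖ + (‖lam j' - lam j‖
            + ‖lam j - u‖) := by
          gcongr
          exact norm_sub_le_norm_sub_add_norm_sub _ _ _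
      _ ≤ δ + (2 * δ * (n - 1) + δ) := by
          refine add_le_add hjv (add_le_add (GG_reach_bound lam δ hn hreach hδ0) ?_)
          rw [habs_comm]
          exact hju
      _ = 2 * δ * n := by ring
  -- root counting function
  set N : ℝ → (GG lam δ).ConnectedComponent → ℕ :=
    fun t q => Multiset.countP (U q) (QP n (cc t)).roots with hNdef
  -- N is constant on [0,1]
  have hNconst : ∀ q, N 1 q = N 0 q := by
    intro q
    haveI : PreconnectedSpace (Set.Icc (0:ℝ) 1) :=
      Subtype.preconnectedSpace isPreconnected_Icc
    set F : Set.Icc (0:ℝ) 1 → ℕ := fun x => N (x : ℝ) q with hFdef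
    have hLC : IsLocallyConstant F := by
      rw [IsLocallyConstant.iff_eventually_eq]
      intro x
      by_contra hcon
      -- extract a sequence violating local constancy
      have hseq : ∀ k : ℕ, ∃ y : Set.Icc (0:ℝ) 1,
          dist y x < 1/((k:ℝ)+1) ∧ F y ≠ F x := by
        intro k
        by_contra hk
        push_neg at hk
        apply hcon
        rw [Metric.eventually_nhds_iff]
        exact ⟨1/((k:ℝ)+1), by positivity, fun {y} hy => hk y hy⟩
      choose y hy1 hy2 using hseq
      have hytend : Tendsto y atTop (nhds x) := by
        rw [tendsto_iff_dist_tendsto_zero]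
        apply squeeze_zero (fun k => dist_nonneg) (fun k => (hy1 k).le)
        exact tendsto_one_div_add_atTop_nhds_zero_nat
      have hconv : ∀ i : Fin n, Tendsto (fun k => cc ((y k) : ℝ) i) atTop
          (nhds (cc (x : ℝ) i)) := by
        intro i
        have hcont : Continuous fun t : ℝ => cc t i := by
          rw [hccdef]
          apply Complex.continuous_ofReal.comp
          exact ((continuous_const.sub continuous_id).mul continuous_const).add
            (continuous_id.mul continuous_const)
        have hvt : Tendsto (fun k => ((y k : ℝ))) atTop (nhds (x : ℝ)) :=
          (continuous_subtype_val.tendsto x).comp hytend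
        exact (hcont.tendsto _).comp hvt
      have henum : ∀ k : ℕ, ∃ f : Fin n → ℂ,
          Multiset.map f Finset.univ.val = (QP n (cc ((y k) : ℝ))).roots :=
        fun k => exists_enum _ (QP_roots_card n hn _)
      choose rts hrts using henum
      obtain ⟨σ, hσ, ρ, hρ, hρtend⟩ := exists_subseq_roots n hn Cv hCv1
        (fun k => cc ((y k) : ℝ)) (cc (x : ℝ))
        (fun k i => hccIcc _ (y k).2 i) hconv rts hrts
      have hρmem : ∀ i : Fin n, ρ i ∈ (QP n (cc (x : ℝ))).roots := by
        intro i
        rw [← hρ]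
        exact Multiset.mem_map_of_mem _ (Finset.mem_univ_val i)
      have hρU : ∀ i : Fin n, ∃ qq, U qq (ρ i) := by
        intro i
        obtain ⟨j, hj⟩ := hnear (x : ℝ) x.2 (ρ i) (hρmem i)
        exact ⟨(GG lam δ).connectedComponentMk j, j, rfl, hj⟩
      choose qi hqi using hρU
      have hrtsmem : ∀ k (i : Fin n), rts (σ k) i ∈ (QP n (cc ((y (σ k)) : ℝ))).roots := by
        intro k i
        rw [← hrts (σ k)]
        exact Multiset.mem_map_of_mem _ (Finset.mem_univ_val i)
      have hev : ∀ i : Fin n, ∀ᶠ k in atTop, U (qi i) (rts (σ k) i) := by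
        intro i
        by_contra hcon2
        have hfreq : ∃ᶠ k in atTop, ¬ U (qi i) (rts (σ k) i) :=
          Filter.not_eventually.1 hcon2
        have hstep : ∃ᶠ k in atTop, ∃ j : Fin n,
            (GG lam δ).connectedComponentMk j ≠ qi i
            ∧ ‖rts (σ k) i - lam j‖ ≤ δ := by
          refine hfreq.mono ?_
          intro k hk
          obtain ⟨j, hj⟩ := hnear _ (y (σ k)).2 _ (hrtsmem k i)
          refine ⟨j, ?_, hj⟩
          intro hjq
          exact hk ⟨j, hjq, hj⟩
        have hj0 : ∃ j : Fin n, ∃ᶠ k in atTop,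
            (GG lam δ).connectedComponentMk j ≠ qi i
            ∧ ‖rts (σ k) i - lam j‖ ≤ δ := by
          by_contra hno
          push_neg at hno
          have hall : ∀ᶠ k in atTop, ∀ j : Fin n,
              ¬((GG lam δ).connectedComponentMk j ≠ qi i
                ∧ ‖rts (σ k) i - lam j‖ ≤ δ) :=
            Filter.eventually_all.2 fun j => (hno j).mono fun k hk h => absurd h.2 (not_le.2 (hk h.1))
          obtain ⟨k, hk1, hk2⟩ := (hstep.and_eventually hall).exists
          obtain ⟨j, hj⟩ := hk1
          exact hk2 j hj
        obtain ⟨j, hjfreq⟩ := hj0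
        obtain ⟨_, hjne, _⟩ := hjfreq.exists
        have hfreq2 : ∃ᶠ k in atTop, rts (σ k) i ∈ {z : ℂ | ‖z - lam j‖ ≤ δ} :=
          hjfreq.mono fun k hk => hk.2
        have hclosed : IsClosed {z : ℂ | ‖z - lam j‖ ≤ δ} := by
          apply isClosed_le
          · exact continuous_norm.comp (continuous_id.sub continuous_const)
          · exact continuous_const
        have hmem2 : ρ i ∈ {z : ℂ | ‖z - lam j‖ ≤ δ} := by
          rw [← hclosed.closure_eq]
          exact mem_closure_of_frequently_of_tendsto hfreq2 (hρtend i)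
        exact hjne (hwelldef (ρ i) _ _ ⟨j, rfl, hmem2⟩ (hqi i))
      have hev2 : ∀ᶠ k in atTop, ∀ i : Fin n, U (qi i) (rts (σ k) i) :=
        Filter.eventually_all.2 hev
      obtain ⟨k, hk⟩ := hev2.exists
      apply hy2 (σ k)
      show Multiset.countP (U q) (QP n (cc ((y (σ k)) : ℝ))).roots
        = Multiset.countP (U q) (QP n (cc (x : ℝ))).roots
      rw [← hrts (σ k), ← hρ, Multiset.countP_map, Multiset.countP_map]
      congr 1
      apply Multiset.filter_congr
      intro i _
      constructor
      · intro hu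
        have hq : q = qi i := hwelldef _ _ _ hu (hk i)
        rw [hq]
        exact hqi i
      · intro hu
        have hq : q = qi i := hwelldef _ _ _ hu (hqi i)
        rw [hq]
        exact hk i
    have h10 := hLC.apply_eq_of_preconnectedSpace
      (⟨1, by norm_num⟩ : Set.Icc (0:ℝ) 1) ⟨0, by norm_num⟩
    simpa [hFdef] using h10
  -- counting equality between endpoints
  have hcnt : ∀ q, Multiset.countP (U q) (Multiset.map lam Finset.univ.val)
      = Multiset.countP (U q) (QP n (cc 1)).roots := by
    intro q
    have h0 : N 0 q = Multiset.countP (U q) (Multiset.map lam Finset.univ.val) := by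
      rw [hNdef]
      simp only
      rw [hroots0]
    rw [← h0, ← hNconst q, hNdef]
  -- build the matching
  have hrel : Multiset.Rel (fun u v => ‖v - u‖ ≤ 2 * δ * n)
      (Multiset.map lam Finset.univ.val) (QP n (cc 1)).roots := by
    apply rel_of_classes _ U U
    · rintro a ha'
      obtain ⟨i, _, rfl⟩ := Multiset.mem_map.1 ha'
      exact ⟨_, hUself i⟩
    · intro a _ c c' h1 h2
      exact hwelldef a c c' h1 h2
    · intro b hb
      obtain ⟨j, hj⟩ := hnear 1 (by norm_num) b hb
      exact ⟨_, j, rfl, hj⟩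
    · intro b _ c c' h1 h2
      exact hwelldef b c c' h1 h2
    · exact hcnt
    · intro c a b _ _ h1 h2
      exact hUD c a b h1 h2
  rw [Multiset.rel_map_left] at hrel
  set L := (Finset.univ : Finset (Fin n)).toList with hLdef
  have hLnd : L.Nodup := Finset.nodup_toList _
  have hLcoe : (L : Multiset (Fin n)) = Finset.univ.val := Finset.coe_toList _
  rw [← hLcoe] at hrel
  obtain ⟨r, hr1, hr2⟩ := exists_fun_of_rel _ L hLnd _ hrel
  have hcc1 : ∀ i : Fin n, ((φh i : ℂ)) = cc 1 i := by
    intro i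
    rw [hccdef]
    push_cast
    ring
  have hgoal : (Polynomial.X ^ n - ∑ i : Fin n, Polynomial.C ((φh i : ℂ))
      * Polynomial.X ^ (n - 1 - (i : ℕ))) = QP n (cc 1) := by
    simp only [QP]
    congr 1
    exact Finset.sum_congr rfl fun i _ => by rw [hcc1 i]
  refine ⟨r, ?_, ?_⟩
  · rw [hgoal, hr1, hLcoe]
  · intro i
    have hiL : i ∈ L := by
      rw [← Multiset.mem_coe, hLcoe]
      exact Finset.mem_univ_val i
    calc ‖r i - lam i‖ ≤ 2 * δ * n := hr2 i hiL
      _ = 4 * n * Cv * ε ^ ((1:ℝ)/n) := by rw [hδdef]; ring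
end

section
/- Let A ∈ ℝ^{n×n} have n distinct complex eigenvalues λ_1, …, λ_n with spectral radius ρ(A) = max_k |λ_k| ≤ 1 (Lyapunov stable), and define Φ = (φ_1, …, φ_n) by χ_A(z) = z^n − φ_1 z^{n−1} − ⋯ − φ_n. Fix j ∈ {1,…,n}. For Φ̂ ∈ ℝ^n let R(Φ̂) denote the set of roots of z^n − φ̂_1 z^{n−1} − ⋯ − φ̂_n. Then limsup_{Φ̂ → Φ, Φ̂ ≠ Φ} dist(λ_j, R(Φ̂)) / ‖Φ̂ − Φ‖₂ ≤ √n · (√2)^{n−1} / ∏_{k ≠ j} |λ_j − λ_k|, where dist(λ_j, R(Φ̂)) = min_{r ∈ R(Φ̂)} |λ_j − r|. -/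
open Finset Polynomial Matrix Topology Filter

lemma aux_pow_le_prod (a : ℝ) (ha : 0 ≤ a) (s : Multiset ℝ) (h : ∀ x ∈ s, a ≤ x) :
    a ^ Multiset.card s ≤ s.prod := by
  induction s using Multiset.induction with
  | empty => simp
  | cons b t ih =>
    simp only [Multiset.card_cons, Multiset.prod_cons, pow_succ]
    have hb : a ≤ b := h b (Multiset.mem_cons_self b t)
    have ht : a ^ Multiset.card t ≤ t.prod := ih fun x hx => h x (Multiset.mem_cons_of_mem hx)
    calc a ^ Multiset.card t * a ≤ t.prod * b := by
          apply mul_le_mul ht hb ha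
          exact Multiset.prod_nonneg fun x hx => le_trans ha (h x (Multiset.mem_cons_of_mem hx))
      _ = b * t.prod := mul_comm _ _

lemma aux_abs_prod (s : Multiset ℂ) : ‖s.prod‖ = (s.map (fun z : ℂ => ‖z‖)).prod := by
  induction s using Multiset.induction with
  | empty => simp
  | cons b t ih => simp [ih]

noncomputable def qq (n : ℕ) (ψ : Fin n → ℝ) : ℂ[X] :=
  X ^ n - ∑ i : Fin n, C ((ψ i : ℂ)) * X ^ (n - 1 - (i : ℕ))

lemma qq_sum_deg (n : ℕ) (ψ : Fin n → ℝ) :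
    (∑ i : Fin n, C ((ψ i : ℂ)) * X ^ (n - 1 - (i : ℕ))).degree ≤ ((n - 1 : ℕ) : WithBot ℕ) := by
  apply (Polynomial.degree_sum_le _ _).trans
  apply Finset.sup_le
  intro i _
  exact (degree_C_mul_X_pow_le _ _).trans (Nat.cast_le.2 (Nat.sub_le _ _))

lemma qq_monic (n : ℕ) (ψ : Fin n → ℝ) (hn : 0 < n) : (qq n ψ).Monic := by
  have := qq_sum_deg n ψ
  unfold qq
  obtain ⟨m, rfl⟩ : ∃ m, n = m + 1 := ⟨n - 1, (Nat.succ_pred_eq_of_pos hn).symm⟩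
  have h2 : (∑ i : Fin (m+1), C ((ψ i : ℂ)) * X ^ (m + 1 - 1 - (i:ℕ))).degree < ((m+1 : ℕ) : WithBot ℕ) := by
    refine lt_of_le_of_lt this ?_
    exact_mod_cast Nat.lt_succ_self m
  exact monic_X_pow_sub h2

lemma qq_natDegree (n : ℕ) (ψ : Fin n → ℝ) (hn : 0 < n) : (qq n ψ).natDegree = n := by
  have hd : (qq n ψ).degree = n := by
    unfold qq
    rw [degree_sub_eq_left_of_degree_lt, degree_X_pow]
    rw [degree_X_pow]
    refine lt_of_le_of_lt (qq_sum_deg n ψ) ?_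
    exact_mod_cast Nat.sub_lt hn one_pos
  exact natDegree_eq_of_degree_eq_some hd

lemma qq_eval (n : ℕ) (ψ : Fin n → ℝ) (z : ℂ) :
    (qq n ψ).eval z = z ^ n - ∑ i : Fin n, (ψ i : ℂ) * z ^ (n - 1 - (i : ℕ)) := by
  simp [qq, eval_finset_sum]

lemma qq_roots_card (n : ℕ) (ψ : Fin n → ℝ) (hn : 0 < n) :
    Multiset.card (qq n ψ).roots = n := by
  have := (Polynomial.splits_iff_card_roots.mp (IsAlgClosed.splits (qq n ψ)))
  rw [this, qq_natDegree n ψ hn]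

lemma qq_abs_eval (n : ℕ) (ψ : Fin n → ℝ) (hn : 0 < n) (z : ℂ) :
    ‖(qq n ψ).eval z‖ = ((qq n ψ).roots.map (fun r => ‖z - r‖)).prod := by
  conv_lhs => rw [← Polynomial.prod_multiset_X_sub_C_of_monic_of_roots_card_eq (qq_monic n ψ hn)
    (by rw [qq_roots_card n ψ hn, qq_natDegree n ψ hn])]
  rw [Polynomial.eval_multiset_prod, aux_abs_prod, Multiset.map_map, Multiset.map_map]
  congr 1
  ext r
  simp

lemma qq_eq_charpoly (n : ℕ) (hn : 0 < n) (A : Matrix (Fin n) (Fin n) ℝ) (φ : Fin n → ℝ)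
    (hφ : ∀ i : Fin n, φ i = -(A.charpoly.coeff (n - ((i : ℕ) + 1)))) :
    qq n φ = A.charpoly.map (algebraMap ℝ ℂ) := by
  have hmonic : A.charpoly.Monic := A.charpoly_monic
  have hnd : A.charpoly.natDegree = n := A.charpoly_natDegree_eq_dim.trans (Fintype.card_fin n)
  ext m
  rcases lt_trichotomy m n with hm | hm | hm
  · have hcoeffX : (X ^ n : ℂ[X]).coeff m = 0 := by
      rw [coeff_X_pow]; simp [Nat.ne_of_lt hm]
    have hsum : (∑ i : Fin n, C ((φ i : ℂ)) * X ^ (n - 1 - (i : ℕ))).coeff m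
        = (φ ⟨n - 1 - m, by omega⟩ : ℂ) := by
      rw [finset_sum_coeff]
      rw [Finset.sum_eq_single (⟨n - 1 - m, by omega⟩ : Fin n)]
      · simp [coeff_C_mul, coeff_X_pow, show n - 1 - (n - 1 - m) = m by omega]
      · intro i _ hi
        have : n - 1 - (i : ℕ) ≠ m := by
          intro h
          apply hi
          have hi' := i.isLt
          apply Fin.ext
          simp only
          omega
        rw [coeff_C_mul, coeff_X_pow, if_neg (fun h => this h.symm)]
        ring
      · simp
    rw [Polynomial.coeff_map, qq, coeff_sub, hcoeffX, hsum]
    have := hφ ⟨n - 1 - m, by omega⟩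
    simp only at this
    rw [show n - (n - 1 - m + 1) = m by omega] at this
    rw [show (φ ⟨n - 1 - m, by omega⟩ : ℝ) = -(A.charpoly.coeff m) from this]
    push_cast
    rw [Complex.coe_algebraMap]
    ring
  · subst hm
    have h1 : (qq m φ).coeff m = 1 := by
      rw [qq, coeff_sub, coeff_X_pow]
      rw [if_pos rfl]
      have : (∑ i : Fin m, C ((φ i : ℂ)) * X ^ (m - 1 - (i : ℕ))).coeff m = 0 := by
        rw [finset_sum_coeff]
        apply Finset.sum_eq_zero
        intro i _
        have : m - 1 - (i : ℕ) ≠ m := by have := i.isLt; omega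
        rw [coeff_C_mul, coeff_X_pow, if_neg (fun h => this h.symm)]
        ring
      rw [this]; ring
    rw [h1, Polynomial.coeff_map]
    have : A.charpoly.coeff m = 1 := by
      have := hmonic
      rw [Polynomial.Monic, Polynomial.leadingCoeff, hnd] at this
      exact this
    rw [this]; simp
  · have h1 : (qq n φ).coeff m = 0 := by
      rw [qq, coeff_sub, coeff_X_pow]
      rw [if_neg (by omega : ¬ m = n)]
      have : (∑ i : Fin n, C ((φ i : ℂ)) * X ^ (n - 1 - (i : ℕ))).coeff m = 0 := by
        rw [finset_sum_coeff]
        apply Finset.sum_eq_zero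
        intro i _
        have : n - 1 - (i : ℕ) ≠ m := by have := i.isLt; omega
        rw [coeff_C_mul, coeff_X_pow, if_neg (fun h => this h.symm)]
        ring
      rw [this]; ring
    rw [h1, Polynomial.coeff_map]
    rw [Polynomial.coeff_eq_zero_of_natDegree_lt (by omega : A.charpoly.natDegree < m)]
    simp

lemma sum_abs_le_sqrt (n : ℕ) (c : Fin n → ℝ) :
    ∑ i, |c i| ≤ Real.sqrt n * Real.sqrt (∑ i, (c i) ^ 2) := by
  have h1 : (∑ i, |c i|) ^ 2 ≤ (n : ℝ) * ∑ i, (c i) ^ 2 := by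
    have := sq_sum_le_card_mul_sum_sq (s := (univ : Finset (Fin n))) (f := fun i => |c i|)
    simpa [sq_abs] using this
  have h2 : 0 ≤ ∑ i, |c i| := Finset.sum_nonneg fun i _ => abs_nonneg _
  calc ∑ i, |c i| = Real.sqrt ((∑ i, |c i|) ^ 2) := (Real.sqrt_sq h2).symm
    _ ≤ Real.sqrt ((n : ℝ) * ∑ i, (c i) ^ 2) := Real.sqrt_le_sqrt h1
    _ = Real.sqrt n * Real.sqrt (∑ i, (c i) ^ 2) := Real.sqrt_mul (by positivity) _

lemma qq_eval_diff (n : ℕ) (ψ φ : Fin n → ℝ) (z : ℂ) (hz : ‖z‖ ≤ 1) :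
    ‖(qq n ψ).eval z - (qq n φ).eval z‖
      ≤ Real.sqrt n * Real.sqrt (∑ i, (ψ i - φ i) ^ 2) := by
  rw [qq_eval, qq_eval]
  have : (z ^ n - ∑ i : Fin n, (ψ i : ℂ) * z ^ (n - 1 - (i : ℕ)))
      - (z ^ n - ∑ i : Fin n, (φ i : ℂ) * z ^ (n - 1 - (i : ℕ)))
      = ∑ i : Fin n, (((φ i - ψ i : ℝ)) : ℂ) * z ^ (n - 1 - (i : ℕ)) := by
    rw [sub_sub_sub_cancel_left, ← Finset.sum_sub_distrib]
    congr 1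
    ext i
    push_cast
    ring
  rw [this]
  calc ‖∑ i : Fin n, (((φ i - ψ i : ℝ)) : ℂ) * z ^ (n - 1 - (i : ℕ))‖
      ≤ ∑ i : Fin n, ‖(((φ i - ψ i : ℝ)) : ℂ) * z ^ (n - 1 - (i : ℕ))‖ := by
        exact norm_sum_le _ _
    _ ≤ ∑ i : Fin n, |ψ i - φ i| := by
        apply Finset.sum_le_sum
        intro i _
        rw [norm_mul, norm_pow, Complex.norm_real, Real.norm_eq_abs]
        have h1 : ‖z‖ ^ (n - 1 - (i:ℕ)) ≤ 1 := pow_le_one₀ (norm_nonneg z) hz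
        calc |(φ i - ψ i : ℝ)| * ‖z‖ ^ (n - 1 - (i:ℕ)) ≤ |(φ i - ψ i)| * 1 :=
              mul_le_mul_of_nonneg_left h1 (abs_nonneg _)
          _ = |ψ i - φ i| := by rw [mul_one, abs_sub_comm]
    _ ≤ Real.sqrt n * Real.sqrt (∑ i, (ψ i - φ i) ^ 2) := sum_abs_le_sqrt n _

lemma roots_match (n : ℕ) (lam : Fin n → ℂ)
    (R : Multiset ℂ) (hcard : Multiset.card R = n) (ε : ℝ)
    (hsep : ∀ k l : Fin n, k ≠ l → 2 * ε ≤ ‖lam k - lam l‖)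
    (hnear : ∀ k : Fin n, ∃ r ∈ R, ‖lam k - r‖ < ε) :
    ∃ r : Fin n → ℂ, R = Multiset.map r Finset.univ.val ∧
      ∀ k, ‖lam k - r k‖ < ε := by
  choose r hrR hrε using hnear
  have hinj : Function.Injective r := by
    intro k l hkl
    by_contra hne
    have h1 : ‖lam k - lam l‖ ≤ ‖lam k - r k‖ + ‖lam l - r l‖ := by
      calc ‖lam k - lam l‖ = ‖(lam k - r k) - (lam l - r l)‖ := by
            rw [hkl]; ring_nf
        _ ≤ _ := norm_sub_le _ _
    have := hsep k l hne
    have := hrε k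
    have := hrε l
    linarith
  have hnodup : (Multiset.map r Finset.univ.val).Nodup :=
    Multiset.Nodup.map hinj Finset.univ.nodup
  have hle : Multiset.map r Finset.univ.val ≤ R := by
    rw [Multiset.le_iff_count]
    intro a
    by_cases ha : a ∈ Multiset.map r Finset.univ.val
    · rw [Multiset.count_eq_one_of_mem hnodup ha]
      obtain ⟨k, _, rfl⟩ := Multiset.mem_map.mp ha
      exact Multiset.one_le_count_iff_mem.mpr (hrR k)
    · rw [Multiset.count_eq_zero_of_notMem ha]
      exact Nat.zero_le _
  have hcards : Multiset.card R ≤ Multiset.card (Multiset.map r Finset.univ.val) := by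
    rw [Multiset.card_map, hcard]
    simp
  exact ⟨r, (Multiset.eq_of_le_of_card_le hle hcards).symm, hrε⟩

/-- Let `A ∈ ℝ^{n×n}` have `n` distinct complex eigenvalues
`λ₁, …, λₙ` with spectral radius `max_k |λ_k| ≤ 1`, and autoregressive
parameters `Φ` defined by `χ_A(z) = z^n − φ₁ z^(n−1) − ⋯ − φₙ`.  Fix `j`.
Then, with `R(Φ̂)` the root set of `z^n − φ̂₁ z^(n−1) − ⋯ − φ̂ₙ`,
`limsup_{Φ̂ → Φ, Φ̂ ≠ Φ} dist(λ_j, R(Φ̂)) / ‖Φ̂ − Φ‖₂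
  ≤ √n (√2)^(n−1) / ∏_{k ≠ j} |λ_j − λ_k|`. -/
theorem stmt8 (n : ℕ) (A : Matrix (Fin n) (Fin n) ℝ)
    (lam : Fin n → ℂ) (hdistinct : Function.Injective lam)
    (hlam : (A.charpoly.map (algebraMap ℝ ℂ)).roots = Multiset.map lam Finset.univ.val)
    (hstable : ∀ k, ‖lam k‖ ≤ 1)
    (φ : Fin n → ℝ)
    (hφ : ∀ i : Fin n, φ i = -(A.charpoly.coeff (n - ((i : ℕ) + 1))))
    (j : Fin n) :
    Filter.limsup
      (fun φh : Fin n → ℝ =>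
        sInf ((fun r => ‖lam j - r‖) ''
            {r : ℂ | (Polynomial.X ^ n
              - ∑ i : Fin n,
                  Polynomial.C ((φh i : ℂ)) * Polynomial.X ^ (n - 1 - (i : ℕ))).eval r = 0})
          / Real.sqrt (∑ i, (φh i - φ i) ^ 2))
      (𝓝[≠] φ)
    ≤ Real.sqrt n * Real.sqrt 2 ^ (n - 1)
        / ∏ k ∈ Finset.univ.erase j, ‖lam j - lam k‖ := by
  have hRHS0 : 0 ≤ Real.sqrt n * Real.sqrt 2 ^ (n - 1)
      / ∏ k ∈ Finset.univ.erase j, ‖lam j - lam k‖ := by positivity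
  rcases Nat.eq_zero_or_pos n with hn0 | hn
  · -- degenerate case n = 0 : the punctured filter is ⊥
    subst hn0
    have hbot : (𝓝[≠] φ) = (⊥ : Filter (Fin 0 → ℝ)) := by
      have h1 : ({φ}ᶜ : Set (Fin 0 → ℝ)) = ∅ := by
        ext ψ
        simp [Subsingleton.elim ψ φ]
      rw [nhdsWithin, h1]
      simp
    rw [hbot, Filter.limsup_eq]
    have h2 : {a : ℝ | ∀ᶠ x in (⊥ : Filter (Fin 0 → ℝ)),
        (fun φh : Fin 0 → ℝ =>
          sInf ((fun r => ‖lam j - r‖) ''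
              {r : ℂ | (Polynomial.X ^ 0
                - ∑ i : Fin 0,
                    Polynomial.C ((φh i : ℂ)) * Polynomial.X ^ (0 - 1 - (i : ℕ))).eval r = 0})
            / Real.sqrt (∑ i, (φh i - φ i) ^ 2)) x ≤ a} = Set.univ := by
      ext a
      simp
    rw [h2, Real.sInf_of_not_bddBelow not_bddBelow_univ]
    exact hRHS0
  -- main case
  haveI : Nontrivial (Fin n → ℝ) := by
    refine ⟨0, 1, fun h => ?_⟩
    have := congrFun h ⟨0, hn⟩
    simpa using this
  haveI : (𝓝[≠] φ).NeBot := Module.punctured_nhds_neBot ℝ (Fin n → ℝ) φ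
  set c : ℝ := (Real.sqrt 2)⁻¹ with hc_def
  have hs2 : 1 < Real.sqrt 2 := by
    nlinarith [Real.sq_sqrt (show (0:ℝ) ≤ 2 by norm_num), Real.sqrt_nonneg 2]
  have hs2' : Real.sqrt 2 ≤ 2 := by
    nlinarith [Real.sq_sqrt (show (0:ℝ) ≤ 2 by norm_num), Real.sqrt_nonneg 2]
  have hcpos : 0 < c := by positivity
  have hc1 : c < 1 := by
    rw [hc_def, inv_lt_one_iff₀]
    right; exact hs2
  have hchalf : 1/2 ≤ c := by
    rw [hc_def]
    rw [le_inv_comm₀ (by norm_num) (by positivity)]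
    calc Real.sqrt 2 ≤ 2 := hs2'
      _ = (1/2)⁻¹ := by norm_num
  have hPpos : 0 < ∏ k ∈ Finset.univ.erase j, ‖lam j - lam k‖ := by
    apply Finset.prod_pos
    intro k hk
    have hkj : k ≠ j := (Finset.mem_erase.mp hk).1
    exact norm_pos_iff.mpr (sub_ne_zero.mpr fun h => hkj (hdistinct h.symm))
  -- all λ_k are roots of qq n φ
  have hq0 : ∀ k, (qq n φ).eval (lam k) = 0 := by
    intro k
    rw [qq_eq_charpoly n hn A φ hφ]
    apply Polynomial.isRoot_of_mem_roots
    rw [hlam]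
    exact Multiset.mem_map_of_mem _ (Finset.mem_val.mpr (Finset.mem_univ k))
  -- choice of ε
  obtain ⟨ε, hε, hsep, hshrink⟩ :
      ∃ ε : ℝ, 0 < ε ∧ (∀ k l : Fin n, k ≠ l → 2 * ε ≤ ‖lam k - lam l‖) ∧
        (∀ k, k ≠ j → ‖lam j - lam k‖ * c ≤ ‖lam j - lam k‖ - ε) := by
    by_cases hS : (Finset.univ.offDiag (α := Fin n)).Nonempty
    · set D := Finset.inf' _ hS (fun p : Fin n × Fin n => ‖lam p.1 - lam p.2‖) with hD_def
      have hD : 0 < D := by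
        rw [hD_def, Finset.lt_inf'_iff]
        rintro ⟨k, l⟩ hkl
        obtain ⟨-, -, hne⟩ := Finset.mem_offDiag.mp hkl
        exact norm_pos_iff.mpr (sub_ne_zero.mpr fun h => hne (hdistinct h))
      have hDle : ∀ k l : Fin n, k ≠ l → D ≤ ‖lam k - lam l‖ := by
        intro k l hkl
        exact Finset.inf'_le (b := (k, l)) _
          (Finset.mem_offDiag.mpr ⟨Finset.mem_univ _, Finset.mem_univ _, hkl⟩)
      refine ⟨(1 - c) * D, mul_pos (by linarith) hD, ?_, ?_⟩
      · intro k l hkl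
        have := hDle k l hkl
        nlinarith
      · intro k hkj
        have h1 := hDle j k (fun h => hkj h.symm)
        nlinarith
    · refine ⟨1, one_pos, ?_, ?_⟩
      · intro k l hkl
        exact absurd ⟨(k, l), Finset.mem_offDiag.mpr ⟨Finset.mem_univ _, Finset.mem_univ _, hkl⟩⟩ hS
      · intro k hkj
        exact absurd ⟨(j, k), Finset.mem_offDiag.mpr
          ⟨Finset.mem_univ _, Finset.mem_univ _, fun h => hkj h.symm⟩⟩ hS
  -- the eventual bound
  have hsmall : ∀ᶠ ψ in 𝓝[≠] φ,
      Real.sqrt n * Real.sqrt (∑ i, (ψ i - φ i) ^ 2) < ε ^ n := by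
    apply eventually_nhdsWithin_of_eventually_nhds
    have hcont : Continuous fun ψ : Fin n → ℝ =>
        Real.sqrt n * Real.sqrt (∑ i, (ψ i - φ i) ^ 2) := by
      apply Continuous.mul continuous_const
      apply Real.continuous_sqrt.comp
      apply continuous_finset_sum
      intro i _
      exact ((continuous_apply i).sub continuous_const).pow 2
    have htd : Filter.Tendsto (fun ψ : Fin n → ℝ =>
        Real.sqrt n * Real.sqrt (∑ i, (ψ i - φ i) ^ 2)) (𝓝 φ) (𝓝 0) := by
      have := hcont.tendsto φ
      simpa using this
    exact htd.eventually_lt_const (by positivity)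
  refine Filter.limsup_le_of_le ?_ ?_
  · refine isCoboundedUnder_le_of_eventually_le _ (x := 0) (Eventually.of_forall fun ψ => ?_)
    exact div_nonneg (Real.sInf_nonneg (by rintro x ⟨s, -, rfl⟩; exact norm_nonneg _))
      (Real.sqrt_nonneg _)
  filter_upwards [hsmall, eventually_mem_nhdsWithin] with ψ h1 h2
  have hψφ : ψ ≠ φ := h2
  set e : ℝ := Real.sqrt (∑ i, (ψ i - φ i) ^ 2) with he_def
  have he : 0 < e := by
    rw [he_def, Real.sqrt_pos]
    obtain ⟨i, hi⟩ := Function.ne_iff.mp hψφ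
    apply Finset.sum_pos' (fun i _ => sq_nonneg _)
    refine ⟨i, Finset.mem_univ i, ?_⟩
    have h3 : ψ i - φ i ≠ 0 := sub_ne_zero.mpr hi
    positivity
  have hceval : ∀ k, ‖(qq n ψ).eval (lam k)‖ ≤ Real.sqrt n * e := by
    intro k
    have := qq_eval_diff n ψ φ (lam k) (hstable k)
    rwa [hq0 k, sub_zero] at this
  set R := (qq n ψ).roots with hR_def
  have hnear : ∀ k : Fin n, ∃ r ∈ R, ‖lam k - r‖ < ε := by
    intro k
    by_contra hcon
    push_neg at hcon
    have hge : ε ^ n ≤ (R.map fun r => ‖lam k - r‖).prod := by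
      have := aux_pow_le_prod ε hε.le (R.map fun r => ‖lam k - r‖) ?_
      · rwa [Multiset.card_map, hR_def, qq_roots_card n ψ hn] at this
      · rintro x hx
        obtain ⟨r, hr, rfl⟩ := Multiset.mem_map.mp hx
        exact hcon r hr
    rw [← qq_abs_eval n ψ hn (lam k)] at hge
    have := hceval k
    linarith
  obtain ⟨r, hR, hrε⟩ := roots_match n lam R (by rw [hR_def]; exact qq_roots_card n ψ hn) ε hsep hnear
  have hprod : ‖(qq n ψ).eval (lam j)‖ = ∏ k, ‖lam j - r k‖ := by
    rw [qq_abs_eval n ψ hn, ← hR_def, hR, Multiset.map_map]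
    rw [Finset.prod_eq_multiset_prod]
    rfl
  have hlowk : ∀ k ∈ Finset.univ.erase j,
      ‖lam j - lam k‖ * c ≤ ‖lam j - r k‖ := by
    intro k hk
    have hkj : k ≠ j := (Finset.mem_erase.mp hk).1
    have htri := norm_sub_le_norm_sub_add_norm_sub (lam j) (r k) (lam k)
    have hflip := norm_sub_rev (r k) (lam k)
    have := hshrink k hkj
    have := hrε k
    linarith
  have hplow : (∏ k ∈ Finset.univ.erase j, ‖lam j - lam k‖) * c ^ (n - 1)
      ≤ ∏ k ∈ Finset.univ.erase j, ‖lam j - r k‖ := by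
    have hcard : (Finset.univ.erase j).card = n - 1 := by
      rw [Finset.card_erase_of_mem (Finset.mem_univ j), Finset.card_univ, Fintype.card_fin]
    calc (∏ k ∈ Finset.univ.erase j, ‖lam j - lam k‖) * c ^ (n - 1)
        = ∏ k ∈ Finset.univ.erase j, (‖lam j - lam k‖ * c) := by
          rw [Finset.prod_mul_distrib, Finset.prod_const, hcard]
      _ ≤ _ := Finset.prod_le_prod (fun k _ => by positivity) hlowk
  have hne0 : qq n ψ ≠ 0 := (qq_monic n ψ hn).ne_zero
  have hrjR : r j ∈ R := by
    rw [hR]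
    exact Multiset.mem_map_of_mem _ (Finset.mem_val.mpr (Finset.mem_univ j))
  have hrj_root : (Polynomial.X ^ n - ∑ i : Fin n,
      Polynomial.C ((ψ i : ℂ)) * Polynomial.X ^ (n - 1 - (i : ℕ))).eval (r j) = 0 := by
    have := Polynomial.isRoot_of_mem_roots (hR_def ▸ hrjR)
    exact this
  have hmem : ‖lam j - r j‖ ∈ ((fun r => ‖lam j - r‖) ''
      {r : ℂ | (Polynomial.X ^ n - ∑ i : Fin n,
        Polynomial.C ((ψ i : ℂ)) * Polynomial.X ^ (n - 1 - (i : ℕ))).eval r = 0}) :=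
    ⟨r j, hrj_root, rfl⟩
  have hbdd : BddBelow ((fun r => ‖lam j - r‖) ''
      {r : ℂ | (Polynomial.X ^ n - ∑ i : Fin n,
        Polynomial.C ((ψ i : ℂ)) * Polynomial.X ^ (n - 1 - (i : ℕ))).eval r = 0}) := by
    refine ⟨0, ?_⟩
    rintro x ⟨s, -, rfl⟩
    exact norm_nonneg _
  set d : ℝ := sInf ((fun r => ‖lam j - r‖) ''
      {r : ℂ | (Polynomial.X ^ n - ∑ i : Fin n,
        Polynomial.C ((ψ i : ℂ)) * Polynomial.X ^ (n - 1 - (i : ℕ))).eval r = 0}) with hd_def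
  have hdle : d ≤ ‖lam j - r j‖ := csInf_le hbdd hmem
  have hd0 : 0 ≤ d := Real.sInf_nonneg (by rintro x ⟨s, -, rfl⟩; exact norm_nonneg _)
  have key : d * ((∏ k ∈ Finset.univ.erase j, ‖lam j - lam k‖) * c ^ (n - 1))
      ≤ Real.sqrt n * e := by
    calc d * ((∏ k ∈ Finset.univ.erase j, ‖lam j - lam k‖) * c ^ (n - 1))
        ≤ ‖lam j - r j‖ * ∏ k ∈ Finset.univ.erase j, ‖lam j - r k‖ :=
          mul_le_mul hdle hplow (mul_nonneg hPpos.le (pow_nonneg hcpos.le _))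
            (norm_nonneg _)
      _ = ∏ k, ‖lam j - r k‖ :=
          Finset.mul_prod_erase Finset.univ (fun k => ‖lam j - r k‖)
            (Finset.mem_univ j)
      _ = ‖(qq n ψ).eval (lam j)‖ := hprod.symm
      _ ≤ Real.sqrt n * e := hceval j
  show d / e ≤ _
  rw [div_le_div_iff₀ he hPpos]
  have hc2 : c ^ (n - 1) * Real.sqrt 2 ^ (n - 1) = 1 := by
    rw [← mul_pow, inv_mul_cancel₀ (by positivity : Real.sqrt 2 ≠ 0), one_pow]
  calc d * ∏ k ∈ Finset.univ.erase j, ‖lam j - lam k‖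
      = d * ((∏ k ∈ Finset.univ.erase j, ‖lam j - lam k‖) * c ^ (n - 1))
        * Real.sqrt 2 ^ (n - 1) := by
        rw [mul_assoc, mul_assoc, hc2, mul_one]
    _ ≤ Real.sqrt n * e * Real.sqrt 2 ^ (n - 1) :=
        mul_le_mul_of_nonneg_right key (by positivity)
    _ = Real.sqrt n * Real.sqrt 2 ^ (n - 1) * e := by ring
end

section
/- Let λ_1, …, λ_n ∈ ℂ be pairwise distinct, let V be the n×n Vandermonde matrix with entries V_{j,i} = λ_j^{i−1}, and fix j ∈ {1,…,n}. Then the product of the Euclidean norm of the j-th row of V and the Euclidean norm of the j-th column of V^{−1} equals ( Σ_{i=0}^{n−1} |λ_j|^{2i} )^{1/2} · ( Σ_{i=0}^{n−1} |S_i(λ_1, …, λ_{j−1}, λ_{j+1}, …, λ_n)|² )^{1/2} / ∏_{k ≠ j} |λ_j − λ_k|, where S_i is the elementary symmetric polynomial of degree i in the n−1 variables obtained by omitting λ_j, with S_0 = 1. -/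
open Finset Matrix Polynomial

/-- For pairwise distinct `λ₁, …, λₙ ∈ ℂ` and the Vandermonde
matrix `V_{j,i} = λ_j^(i−1)`, the product of the Euclidean norm of the `j`-th
row of `V` and the Euclidean norm of the `j`-th column of `V⁻¹` equals
`(∑_{i=0}^{n−1} |λ_j|^(2i))^(1/2) · (∑_{i=0}^{n−1} |S_i(λ₁,…,λ̂_j,…,λₙ)|²)^(1/2)
  / ∏_{k≠j} |λ_j − λ_k|`. -/
theorem stmt11 (n : ℕ) (lam : Fin n → ℂ) (hdistinct : Function.Injective lam)
    (j : Fin n) :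
    Real.sqrt (∑ i, ‖Matrix.vandermonde lam j i‖ ^ 2)
      * Real.sqrt (∑ i, ‖(Matrix.vandermonde lam)⁻¹ i j‖ ^ 2)
    = Real.sqrt (∑ i ∈ Finset.range n, ‖lam j‖ ^ (2 * i))
        * Real.sqrt (∑ i ∈ Finset.range n,
            ‖(((Finset.univ.erase j).val.map lam).esymm i)‖ ^ 2)
        / ∏ k ∈ Finset.univ.erase j, ‖lam j - lam k‖ := by
  have hn : 0 < n := j.pos
  set s : Finset (Fin n) := Finset.univ.erase j with hs
  set D : ℂ := ∏ k ∈ s, (lam j - lam k) with hD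
  have hD0 : D ≠ 0 := by
    refine Finset.prod_ne_zero_iff.mpr fun k hk => sub_ne_zero.mpr fun h => ?_
    exact (Finset.mem_erase.mp hk).1 ((hdistinct h).symm)
  have hdet : (Matrix.vandermonde lam).det ≠ 0 :=
    Matrix.det_vandermonde_ne_zero_iff.mpr hdistinct
  have hV : IsUnit (Matrix.vandermonde lam).det := isUnit_iff_ne_zero.mpr hdet
  set P : ℂ[X] := ∏ k ∈ s, (X - C (lam k)) with hP
  have hcard : s.card = n - 1 := by
    rw [hs, Finset.card_erase_of_mem (Finset.mem_univ j), Finset.card_univ, Fintype.card_fin]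
  have hdeg : P.natDegree = n - 1 := by
    rw [hP, Polynomial.natDegree_prod_of_monic _ _ (fun k _ => monic_X_sub_C _)]
    simp [hcard]
  have hdeg' : P.natDegree < n := by omega
  have hcoeff : ∀ i : Fin n, P.coeff i =
      (-1) ^ (n - 1 - i) * (s.val.map lam).esymm (n - 1 - i) := by
    intro i
    have hc : Multiset.card (s.val.map lam) = n - 1 := by
      rw [Multiset.card_map]; exact hcard
    have hi : (i : ℕ) ≤ Multiset.card (s.val.map lam) := by
      rw [hc]; omega
    have hPm : P = ((s.val.map lam).map fun t => X - C t).prod := by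
      rw [hP, Finset.prod_eq_multiset_prod, Multiset.map_map]
      rfl
    have := Multiset.prod_X_sub_C_coeff (s.val.map lam) hi
    rw [hc] at this
    rw [hPm, this]
  have hevalj : P.eval (lam j) = D := by
    rw [hP, hD, Polynomial.eval_prod]
    simp
  have hevalk : ∀ k ∈ s, P.eval (lam k) = 0 := by
    intro k hk
    rw [hP, Polynomial.eval_prod]
    exact Finset.prod_eq_zero hk (by simp)
  set w : Fin n → ℂ := fun i => P.coeff i / D with hw
  have hmul : (Matrix.vandermonde lam).mulVec w = Pi.single j 1 := by
    funext k
    have : (Matrix.vandermonde lam).mulVec w k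
        = (∑ i : Fin n, P.coeff i * lam k ^ (i : ℕ)) / D := by
      rw [Matrix.mulVec, dotProduct, Finset.sum_div]
      refine Finset.sum_congr rfl fun i _ => ?_
      simp only [hw, Matrix.vandermonde_apply]
      ring
    rw [this, Fin.sum_univ_eq_sum_range (fun i => P.coeff i * lam k ^ i) n,
      ← Polynomial.eval_eq_sum_range' hdeg']
    by_cases hkj : k = j
    · subst hkj
      rw [hevalj, div_self hD0, Pi.single_eq_same]
    · rw [hevalk k (Finset.mem_erase.mpr ⟨hkj, Finset.mem_univ k⟩), zero_div,
        Pi.single_eq_of_ne hkj]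
  have hinv : ∀ i : Fin n, (Matrix.vandermonde lam)⁻¹ i j = w i := by
    intro i
    have h1 : (Matrix.vandermonde lam)⁻¹.mulVec ((Matrix.vandermonde lam).mulVec w) = w := by
      rw [Matrix.mulVec_mulVec, Matrix.nonsing_inv_mul _ hV, Matrix.one_mulVec]
    rw [hmul] at h1
    have := congrFun h1 i
    rw [← this, Matrix.mulVec, dotProduct]
    simp [Pi.single_apply]
  -- rewrite first factor
  have e1 : (∑ i : Fin n, ‖Matrix.vandermonde lam j i‖ ^ 2)
      = ∑ i ∈ Finset.range n, ‖lam j‖ ^ (2 * i) := by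
    rw [← Fin.sum_univ_eq_sum_range (fun i => ‖lam j‖ ^ (2 * i)) n]
    refine Finset.sum_congr rfl fun i _ => ?_
    rw [Matrix.vandermonde_apply, norm_pow, ← pow_mul, mul_comm]
  -- second factor
  have e2 : (∑ i : Fin n, ‖(Matrix.vandermonde lam)⁻¹ i j‖ ^ 2)
      = (∑ i ∈ Finset.range n, ‖(s.val.map lam).esymm i‖ ^ 2)
        / ‖D‖ ^ 2 := by
    have : ∀ i : Fin n, ‖(Matrix.vandermonde lam)⁻¹ i j‖ ^ 2
        = ‖(s.val.map lam).esymm (n - 1 - i)‖ ^ 2 / ‖D‖ ^ 2 := by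
      intro i
      rw [hinv i, hw]
      simp only [norm_div, div_pow]
      congr 2
      rw [hcoeff i]
      simp
    rw [Finset.sum_congr rfl (fun i _ => this i), ← Finset.sum_div]
    congr 1
    rw [Fin.sum_univ_eq_sum_range (fun i => ‖(s.val.map lam).esymm (n - 1 - i)‖ ^ 2) n]
    exact Finset.sum_range_reflect (fun i => ‖(s.val.map lam).esymm i‖ ^ 2) n
  rw [e1, e2]
  rw [Real.sqrt_div (by positivity), Real.sqrt_sq (by positivity), mul_div_assoc]
  congr 1
  rw [hD, norm_prod]
end

section
/- Let C, E ∈ ℂ^{n×n}. Suppose λ : ℝ → ℂ and v : ℝ → ℂ^n are differentiable at 0, satisfy (C + tE) v(t) = λ(t) v(t) for all t in a neighborhood of 0, and v(0) ≠ 0. Let w ∈ ℂ^n be a left eigenvector of C for the eigenvalue λ(0), i.e. w* C = λ(0) w*, with w* v(0) ≠ 0. Then the derivative of the eigenvalue at 0 is λ'(0) = ( w* E v(0) ) / ( w* v(0) ). -/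
open Matrix Topology

/-- If `(C + tE) v(t) = λ(t) v(t)` near `t = 0`, with `λ, v`
differentiable at `0`, `v 0 ≠ 0`, and `w` is a left eigenvector of `C` for
`λ 0` (`w* C = λ(0) w*`) with `w* v(0) ≠ 0`, then
`λ'(0) = (w* E v(0)) / (w* v(0))`. -/
theorem stmt14 (n : ℕ) (Cm E : Matrix (Fin n) (Fin n) ℂ)
    (lam : ℝ → ℂ) (v : ℝ → Fin n → ℂ)
    (hlam : DifferentiableAt ℝ lam 0) (hv : DifferentiableAt ℝ v 0)
    (heig : ∀ᶠ t in 𝓝 (0 : ℝ), (Cm + t • E).mulVec (v t) = lam t • v t)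
    (hv0 : v 0 ≠ 0)
    (w : Fin n → ℂ)
    (hw : Matrix.vecMul (star w) Cm = lam 0 • star w)
    (hwv : star w ⬝ᵥ v 0 ≠ 0) :
    deriv lam 0 = (star w ⬝ᵥ E.mulVec (v 0)) / (star w ⬝ᵥ v 0) := by
  have hgdiff : ∀ (u : Fin n → ℂ), DifferentiableAt ℝ (fun t => u ⬝ᵥ v t) 0 := by
    intro u
    simp only [dotProduct]
    apply DifferentiableAt.fun_sum
    intro i _
    exact (differentiableAt_const _).mul (differentiableAt_pi.1 hv i)
  set g : ℝ → ℂ := fun t => star w ⬝ᵥ v t with hg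
  set h : ℝ → ℂ := fun t => Matrix.vecMul (star w) E ⬝ᵥ v t with hh
  have key : ∀ᶠ t in 𝓝 (0 : ℝ), (lam t - lam 0) * g t = (t : ℂ) * h t := by
    filter_upwards [heig] with t ht
    have h1 := congrArg (fun x => star w ⬝ᵥ x) ht
    simp only [add_mulVec, smul_mulVec, dotProduct_add, dotProduct_smul,
      dotProduct_mulVec, hw, smul_dotProduct, smul_eq_mul, Complex.real_smul] at h1
    rw [hg, hh]
    linear_combination -h1
  have hF : HasDerivAt (fun t => (lam t - lam 0) * g t) (deriv lam 0 * g 0) 0 := by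
    have h1 : HasDerivAt (fun t => lam t - lam 0) (deriv lam 0) 0 :=
      (hlam.hasDerivAt).sub_const _
    have h2 : HasDerivAt g (deriv g 0) 0 := (hgdiff _).hasDerivAt
    have := h1.mul h2
    simpa [Pi.mul_def] using this
  have hG : HasDerivAt (fun t : ℝ => (t : ℂ) * h t) (h 0) 0 := by
    have h1 : HasDerivAt (fun t : ℝ => (t : ℂ)) 1 0 := by
      exact Complex.ofRealCLM.hasDerivAt (x := (0 : ℝ))
    have h2 : HasDerivAt h (deriv h 0) 0 := (hgdiff _).hasDerivAt
    have := h1.mul h2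
    simpa [Pi.mul_def] using this
  have hderiv : deriv lam 0 * g 0 = h 0 := by
    rw [← hF.deriv, ← hG.deriv]
    exact Filter.EventuallyEq.deriv_eq key
  have : h 0 = star w ⬝ᵥ E.mulVec (v 0) := by
    rw [hh, dotProduct_mulVec]
  rw [eq_div_iff hwv, ← this, ← hderiv]
end

section
/- Let C, E ∈ ℂ^{n×n}. Suppose λ : ℝ → ℂ and v : ℝ → ℂ^n are differentiable at 0, satisfy (C + tE) v(t) = λ(t) v(t) for all t in a neighborhood of 0, and v(0) ≠ 0. Let w ∈ ℂ^n satisfy w* C = λ(0) w* and w* v(0) ≠ 0. Then |λ'(0)| ≤ ( ‖w‖₂ ‖v(0)‖₂ / |w* v(0)| ) · ‖E‖₂, where ‖E‖₂ denotes the operator norm of E with respect to the Euclidean norm; that is, the eigenvalue condition number κ = ‖w‖₂‖v(0)‖₂/|w* v(0)| controls the first-order eigenvalue perturbation. -/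
open Matrix Topology

/-- In the setting of first-order eigenvalue perturbation
(`(C + tE) v(t) = λ(t) v(t)` near `0`, `λ, v` differentiable at `0`,
`v 0 ≠ 0`, `w* C = λ(0) w*`, `w* v(0) ≠ 0`), the derivative of the eigenvalue
satisfies `|λ'(0)| ≤ (‖w‖₂ ‖v(0)‖₂ / |w* v(0)|) · ‖E‖₂`, where `‖E‖₂` is the
operator norm of `E` with respect to the Euclidean norm. -/
theorem stmt15 (n : ℕ) (Cm E : Matrix (Fin n) (Fin n) ℂ)
    (lam : ℝ → ℂ) (v : ℝ → Fin n → ℂ)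
    (hlam : DifferentiableAt ℝ lam 0) (hv : DifferentiableAt ℝ v 0)
    (heig : ∀ᶠ t in 𝓝 (0 : ℝ), (Cm + t • E).mulVec (v t) = lam t • v t)
    (hv0 : v 0 ≠ 0)
    (w : Fin n → ℂ)
    (hw : Matrix.vecMul (star w) Cm = lam 0 • star w)
    (hwv : star w ⬝ᵥ v 0 ≠ 0) :
    ‖deriv lam 0‖
      ≤ (Real.sqrt (∑ i, ‖w i‖ ^ 2)
          * Real.sqrt (∑ i, ‖v 0 i‖ ^ 2)
          / ‖star w ⬝ᵥ v 0‖)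
        * ‖Matrix.toEuclideanCLM (𝕜 := ℂ) E‖ := by
  have hvi : ∀ i, DifferentiableAt ℝ (fun t => v t i) 0 := by
    intro i
    exact (differentiableAt_pi.mp hv) i
  -- differentiability of dot products with v
  have hdot : ∀ u : Fin n → ℂ, DifferentiableAt ℝ (fun t => u ⬝ᵥ v t) 0 := by
    intro u
    simp only [dotProduct]
    exact DifferentiableAt.fun_sum fun i _ => (hvi i).const_mul (u i)
  set φ : ℝ → ℂ := fun t => star w ⬝ᵥ v t with hφ
  set ψ : ℝ → ℂ := fun t => (Matrix.vecMul (star w) E) ⬝ᵥ v t with hψ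
  have hφdiff : DifferentiableAt ℝ φ 0 := hdot _
  have hψdiff : DifferentiableAt ℝ ψ 0 := hdot _
  -- key identity near 0
  have hkey : (fun t => (lam t - lam 0) * φ t) =ᶠ[𝓝 (0:ℝ)]
      (fun t : ℝ => (t : ℂ) * ψ t) := by
    filter_upwards [heig] with t ht
    have h1 : star w ⬝ᵥ ((Cm + t • E).mulVec (v t)) = star w ⬝ᵥ (lam t • v t) := by
      rw [ht]
    rw [Matrix.add_mulVec, dotProduct_add, dotProduct_smul,
      Matrix.dotProduct_mulVec, hw, smul_dotProduct,
      Matrix.smul_mulVec, dotProduct_smul] at h1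
    have h2 : lam 0 * φ t + (t : ℂ) * ψ t = lam t * φ t := by
      simpa [hφ, hψ, ← Matrix.dotProduct_mulVec, smul_eq_mul, Complex.real_smul] using h1
    linear_combination -h2
  -- derivatives agree
  have hd1 : deriv (fun t => (lam t - lam 0) * φ t) 0 = deriv lam 0 * φ 0 := by
    rw [deriv_fun_mul (hlam.sub_const _) hφdiff]
    simp [deriv_sub_const]
  have hd2 : deriv (fun t : ℝ => (t : ℂ) * ψ t) 0 = ψ 0 := by
    have hof : DifferentiableAt ℝ (fun t : ℝ => (t : ℂ)) 0 :=
      Complex.ofRealCLM.differentiableAt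
    rw [deriv_fun_mul hof hψdiff]
    have : deriv (fun t : ℝ => (t : ℂ)) 0 = 1 := by
      have h := (Complex.ofRealCLM.hasDerivAt (x := (0:ℝ))).deriv
      rw [Complex.ofRealCLM_apply] at h
      exact h
    simp [this]
  have heq : deriv lam 0 * φ 0 = ψ 0 := by
    rw [← hd1, ← hd2, hkey.deriv_eq]
  -- express ψ 0 via inner product
  set W : EuclideanSpace ℂ (Fin n) := (WithLp.equiv 2 (Fin n → ℂ)).symm w with hW
  set V : EuclideanSpace ℂ (Fin n) := (WithLp.equiv 2 (Fin n → ℂ)).symm (v 0) with hV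
  set T := Matrix.toEuclideanCLM (𝕜 := ℂ) E with hT
  have hψ0 : ψ 0 = @inner ℂ _ _ W (T V) := by
    change star w ᵥ* E ⬝ᵥ v 0 = (E *ᵥ v 0) ⬝ᵥ star w
    rw [← Matrix.dotProduct_mulVec, dotProduct_comm]
  have hnormW : ‖W‖ = Real.sqrt (∑ i, ‖w i‖ ^ 2) := by
    rw [EuclideanSpace.norm_eq]
    simp [hW]
  have hnormV : ‖V‖ = Real.sqrt (∑ i, ‖v 0 i‖ ^ 2) := by
    rw [EuclideanSpace.norm_eq]
    simp [hV]
  have habs : ‖ψ 0‖ ≤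
      Real.sqrt (∑ i, ‖w i‖ ^ 2)
        * Real.sqrt (∑ i, ‖v 0 i‖ ^ 2)
        * ‖T‖ := by
    rw [hψ0]
    calc ‖@inner ℂ _ _ W (T V)‖ ≤ ‖W‖ * ‖T V‖ := norm_inner_le_norm W (T V)
      _ ≤ ‖W‖ * (‖T‖ * ‖V‖) := by
          exact mul_le_mul_of_nonneg_left (T.le_opNorm V) (norm_nonneg W)
      _ = ‖W‖ * ‖V‖ * ‖T‖ := by ring
      _ = _ := by rw [hnormW, hnormV]
  -- conclude
  have hφ0 : φ 0 = star w ⬝ᵥ v 0 := rfl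
  have hφ0pos : 0 < ‖star w ⬝ᵥ v 0‖ := by
    simpa [norm_pos_iff] using hwv
  have hderiv : deriv lam 0 = ψ 0 / (star w ⬝ᵥ v 0) := by
    rw [eq_div_iff hwv, ← hφ0]
    exact heq
  rw [hderiv, norm_div, div_mul_eq_mul_div, div_le_div_iff₀ hφ0pos hφ0pos]
  ring_nf
  nlinarith [habs, hφ0pos.le, norm_nonneg (ψ 0)]
end

section
/- Let Φ₁, Ψ₁, Φ₂, Ψ₂ ∈ ℂ[L] be polynomials with deg Φ₁ ≤ p, deg Ψ₁ ≤ m, deg Φ₂ ≤ q, deg Ψ₂ ≤ n. Let y, z, ε, δ : ℤ → ℂ be sequences such that (Φ₁(L) y)_t = (Ψ₁(L) ε)_t and (Φ₂(L) z)_t = (Ψ₂(L) δ)_t for all t ∈ ℤ, where for a polynomial P(L) = Σ_{i=0}^{d} a_i L^i the lag action is (P(L) u)_t = Σ_{i=0}^{d} a_i u_{t−i}. Then for all t ∈ ℤ: ((Φ₁Φ₂)(L) (y + z))_t = ((Φ₂Ψ₁)(L) ε)_t + ((Φ₁Ψ₂)(L) δ)_t. Moreover deg(Φ₁Φ₂)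 ≤ p + q, deg(Φ₂Ψ₁) ≤ q + m, and deg(Φ₁Ψ₂) ≤ p + n; i.e., the sum of an ARMA(p, m) recursion and an ARMA(q, n) recursion satisfies an ARMA(p+q, max(p+n, q+m)) recursion. -/
open Finset Polynomial

/-- The action of a lag polynomial `P(L) = ∑ i, a_i L^i` on a sequence
`u : ℤ → ℂ`: `(P(L) u)_t = ∑ i, a_i u_{t−i}`. -/
noncomputable def lagAct (P : Polynomial ℂ) (u : ℤ → ℂ) (t : ℤ) : ℂ :=
  ∑ i ∈ Finset.range (P.natDegree + 1), P.coeff i * u (t - (i : ℤ))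

lemma lagAct_ext (P : Polynomial ℂ) (u : ℤ → ℂ) (t : ℤ) {N : ℕ}
    (h : P.natDegree < N) :
    lagAct P u t = ∑ i ∈ Finset.range N, P.coeff i * u (t - (i : ℤ)) := by
  apply Finset.sum_subset (Finset.range_subset_range.2 h)
  intro i _ hi
  rw [Polynomial.coeff_eq_zero_of_natDegree_lt, zero_mul]
  simpa using hi

lemma lagAct_mul (P Q : Polynomial ℂ) (u : ℤ → ℂ) (t : ℤ) :
    lagAct (P * Q) u t = lagAct P (fun s => lagAct Q u s) t := by
  have hd : (P * Q).natDegree < P.natDegree + Q.natDegree + 1 :=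
    Nat.lt_succ_of_le (Polynomial.natDegree_mul_le)
  rw [lagAct_ext (P * Q) u t hd]
  have lhs : ∑ k ∈ Finset.range (P.natDegree + Q.natDegree + 1),
      (P * Q).coeff k * u (t - (k : ℤ))
      = ∑ k ∈ Finset.range (P.natDegree + Q.natDegree + 1),
          ∑ ij ∈ Finset.HasAntidiagonal.antidiagonal k,
            P.coeff ij.1 * Q.coeff ij.2 * u (t - (ij.1 : ℤ) - (ij.2 : ℤ)) := by
    refine Finset.sum_congr rfl fun k _ => ?_
    rw [Polynomial.coeff_mul, Finset.sum_mul]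
    refine Finset.sum_congr rfl fun ij hij => ?_
    have : ij.1 + ij.2 = k := Finset.HasAntidiagonal.mem_antidiagonal.mp hij
    subst this
    push_cast
    ring_nf
  rw [lhs]
  rw [← Finset.sum_biUnion]
  · -- compare with product set
    have hsub : Finset.range (P.natDegree + 1) ×ˢ Finset.range (Q.natDegree + 1)
        ⊆ (Finset.range (P.natDegree + Q.natDegree + 1)).biUnion
            Finset.HasAntidiagonal.antidiagonal := by
      intro ij hij
      simp only [Finset.mem_product, Finset.mem_range] at hij
      refine Finset.mem_biUnion.2 ⟨ij.1 + ij.2, ?_, ?_⟩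
      · exact Finset.mem_range.2 (by omega)
      · simp [Finset.HasAntidiagonal.mem_antidiagonal]
    rw [← Finset.sum_subset hsub]
    · rw [Finset.sum_product]
      unfold lagAct
      refine Finset.sum_congr rfl fun i _ => ?_
      rw [Finset.mul_sum]
      refine Finset.sum_congr rfl fun j _ => ?_
      ring_nf
    · intro ij _ hij
      simp only [Finset.mem_product, Finset.mem_range, not_and_or, not_lt] at hij
      rcases hij with h | h
      · rw [Polynomial.coeff_eq_zero_of_natDegree_lt (by omega), zero_mul, zero_mul]
      · rw [Polynomial.coeff_eq_zero_of_natDegree_lt (show Q.natDegree < ij.2 by omega),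
          mul_zero, zero_mul]
  · intro a _ b _ hab
    simp only [Finset.disjoint_left, Finset.HasAntidiagonal.mem_antidiagonal]
    intro ij h1 h2
    exact hab (h1 ▸ h2)

lemma lagAct_add_right (P : Polynomial ℂ) (u v : ℤ → ℂ) (t : ℤ) :
    lagAct P (u + v) t = lagAct P u t + lagAct P v t := by
  unfold lagAct
  rw [← Finset.sum_add_distrib]
  refine Finset.sum_congr rfl fun i _ => ?_
  simp [mul_add]

lemma lagAct_congr (P : Polynomial ℂ) {u v : ℤ → ℂ} (h : ∀ s, u s = v s) (t : ℤ) :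
    lagAct P u t = lagAct P v t := by
  unfold lagAct
  simp [h]

/-- **sum of ARMA processes.** If `Φ₁(L) y = Ψ₁(L) ε` and
`Φ₂(L) z = Ψ₂(L) δ` with `deg Φ₁ ≤ p`, `deg Ψ₁ ≤ m`, `deg Φ₂ ≤ q`,
`deg Ψ₂ ≤ n`, then `(Φ₁Φ₂)(L)(y + z) = (Φ₂Ψ₁)(L) ε + (Φ₁Ψ₂)(L) δ`, and
`deg(Φ₁Φ₂) ≤ p + q`, `deg(Φ₂Ψ₁) ≤ q + m`, `deg(Φ₁Ψ₂) ≤ p + n`; i.e. the sum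
of an ARMA(p, m) and an ARMA(q, n) recursion satisfies an
ARMA(p+q, max(p+n, q+m)) recursion. -/
theorem stmt16 (p m q n : ℕ) (Φ₁ Ψ₁ Φ₂ Ψ₂ : Polynomial ℂ)
    (hΦ₁ : Φ₁.natDegree ≤ p) (hΨ₁ : Ψ₁.natDegree ≤ m)
    (hΦ₂ : Φ₂.natDegree ≤ q) (hΨ₂ : Ψ₂.natDegree ≤ n)
    (y z ε δ : ℤ → ℂ)
    (h₁ : ∀ t : ℤ, lagAct Φ₁ y t = lagAct Ψ₁ ε t)
    (h₂ : ∀ t : ℤ, lagAct Φ₂ z t = lagAct Ψ₂ δ t) :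
    (∀ t : ℤ, lagAct (Φ₁ * Φ₂) (y + z) t
        = lagAct (Φ₂ * Ψ₁) ε t + lagAct (Φ₁ * Ψ₂) δ t)
    ∧ (Φ₁ * Φ₂).natDegree ≤ p + q
    ∧ (Φ₂ * Ψ₁).natDegree ≤ q + m
    ∧ (Φ₁ * Ψ₂).natDegree ≤ p + n := by
  refine ⟨fun t => ?_,
    Polynomial.natDegree_mul_le.trans (add_le_add hΦ₁ hΦ₂),
    Polynomial.natDegree_mul_le.trans (add_le_add hΦ₂ hΨ₁),
    Polynomial.natDegree_mul_le.trans (add_le_add hΦ₁ hΨ₂)⟩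
  rw [lagAct_add_right]
  congr 1
  · rw [mul_comm Φ₁ Φ₂, lagAct_mul, lagAct_mul]
    exact lagAct_congr Φ₂ h₁ t
  · rw [lagAct_mul, lagAct_mul]
    exact lagAct_congr Φ₁ h₂ t
end
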